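/- arXiv:1210.3670 — 6 statements merged into one kernel-verified Lean document; each statement's English description precedes it below -/
import Mathlib

section
/- Let $R_0>0$, $A_1>0$, $1<\gamma<4/3$. Then the total mass $M(R)=4\pi A_1\int_{R_0}^{R}(1/r-1/R)^{1/(\gamma-1)}r^2\,dr$ converges as $R\to\infty$ to $M^*=\frac{4\pi A_1(\gamma-1)}{4-3\gamma}R_0^{-(4-3\gamma)/(\gamma-1)}$, i.e., $\lim_{R\to\infty}M(R)=M^*$; in particular $M(R)<M^*$ for all $R>R_0$. -/
open Real
-- auxiliary lemmas, tested separately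
lemma aux_contf (R : ℝ) (p : ℝ) (hp0 : 0 < p) :
    ContinuousOn (fun r : ℝ => (1 / r - 1 / R) ^ p * r ^ 2) ({0}ᶜ : Set ℝ) := by
  apply ContinuousOn.mul _ (continuous_pow 2).continuousOn
  apply ContinuousOn.rpow_const
  · exact (continuousOn_const.div continuousOn_id fun x hx => hx).sub continuousOn_const
  · exact fun x _ => Or.inr hp0.le

lemma aux_contg (p : ℝ) : ContinuousOn (fun r : ℝ => r ^ (2 - p)) ({0}ᶜ : Set ℝ) :=
  ContinuousOn.rpow_const continuousOn_id fun x hx => Or.inl hx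

lemma aux_sub {R0 : ℝ} (hR0 : 0 < R0) (a b : ℝ) (ha : R0 ≤ a) (hb : R0 ≤ b) :
    Set.uIcc a b ⊆ ({0}ᶜ : Set ℝ) := fun x hx =>
  ne_of_gt (lt_of_lt_of_le hR0 (le_trans (le_min ha hb) hx.1))

lemma aux_int {R0 p : ℝ} (hR0 : 0 < R0) (hp3 : 3 < p) (S : ℝ) (hS : R0 ≤ S) :
    ∫ r in R0..S, r ^ (2 - p) = (R0 ^ (3 - p) - S ^ (3 - p)) / (p - 3) := by
  rw [integral_rpow (Or.inr ⟨by intro h; linarith [h],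
    Set.notMem_uIcc_of_lt hR0 (lt_of_lt_of_le hR0 hS)⟩)]
  rw [show (2 : ℝ) - p + 1 = 3 - p by ring, ← neg_div_neg_eq, neg_sub, neg_sub]

lemma aux_ptle {R0 p : ℝ} (hR0 : 0 < R0) (hp0 : 0 < p) (R r : ℝ) (hr : r ∈ Set.Icc R0 R) :
    (1 / r - 1 / R) ^ p * r ^ 2 ≤ r ^ (2 - p) := by
  have hr0 : 0 < r := lt_of_lt_of_le hR0 hr.1
  have hR' : 0 < R := lt_of_lt_of_le hr0 hr.2
  have h1 : (1 / r - 1 / R) ^ p ≤ (1 / r) ^ p := by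
    apply Real.rpow_le_rpow _ _ hp0.le
    · have : 1 / R ≤ 1 / r := one_div_le_one_div_of_le hr0 hr.2
      linarith
    · have : 0 < 1 / R := by positivity
      linarith
  calc (1 / r - 1 / R) ^ p * r ^ 2 ≤ (1 / r) ^ p * r ^ 2 :=
        mul_le_mul_of_nonneg_right h1 (sq_nonneg r)
    _ = r ^ (2 - p) := by
        rw [one_div, ← Real.rpow_neg_one r, ← Real.rpow_natCast r 2,
          ← Real.rpow_mul hr0.le, ← Real.rpow_add hr0]
        norm_num
        ring_nf

lemma aux_ptge {R0 p : ℝ} (hR0 : 0 < R0) (hp1 : 1 ≤ p) (S R r : ℝ) (hSR : S ≤ R)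
    (hr : r ∈ Set.Icc R0 S) :
    (1 - p * S / R) * r ^ (2 - p) ≤ (1 / r - 1 / R) ^ p * r ^ 2 := by
  have hr0 : 0 < r := lt_of_lt_of_le hR0 hr.1
  have hRpos : 0 < R := lt_of_lt_of_le (lt_of_lt_of_le hr0 hr.2) hSR
  have hrR : r ≤ R := le_trans hr.2 hSR
  have hfac : 1 / r - 1 / R = (1 / r) * (1 - r / R) := by
    field_simp
  have hb : 1 - p * S / R ≤ (1 - r / R) ^ p := by
    have := one_add_mul_self_le_rpow_one_add (s := -(r / R))
      (by rw [neg_le_neg_iff, div_le_one hRpos] at *; linarith) hp1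
    have h2 : 1 - p * S / R ≤ 1 + p * (-(r / R)) := by
      have h3 : r / R ≤ S / R := div_le_div_of_nonneg_right hr.2 hRpos.le
      have h4 := mul_le_mul_of_nonneg_left h3 (by linarith : (0:ℝ) ≤ p)
      have h5 : p * (S / R) = p * S / R := by ring
      linarith
    calc 1 - p * S / R ≤ 1 + p * (-(r / R)) := h2
      _ ≤ (1 + -(r / R)) ^ p := this
      _ = (1 - r / R) ^ p := by ring_nf
  have hmul : (1 / r - 1 / R) ^ p = (1 - r / R) ^ p * r ^ (-p) := by
    rw [hfac, Real.mul_rpow (by positivity) (by rw [sub_nonneg, div_le_one hRpos]; exact hrR),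
      one_div, Real.inv_rpow hr0.le, ← Real.rpow_neg hr0.le]
    ring
  rw [hmul]
  have hkey : r ^ (-p) * r ^ 2 = r ^ (2 - p) := by
    rw [← Real.rpow_natCast r 2, ← Real.rpow_add hr0]
    norm_num
    ring_nf
  calc (1 - p * S / R) * r ^ (2 - p) ≤ (1 - r / R) ^ p * r ^ (2 - p) :=
        mul_le_mul_of_nonneg_right hb (Real.rpow_nonneg hr0.le _)
    _ = (1 - r / R) ^ p * r ^ (-p) * r ^ 2 := by rw [mul_assoc, hkey]

theorem stmt_2 (R0 A1 γ Mstar : ℝ) (M : ℝ → ℝ)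
    (hR0 : 0 < R0) (hA1 : 0 < A1) (hγ1 : 1 < γ) (hγ2 : γ < 4 / 3)
    (hM : ∀ R : ℝ, M R = 4 * π * A1 * ∫ r in R0..R, (1 / r - 1 / R) ^ (1 / (γ - 1)) * r ^ 2)
    (hMstar : Mstar = 4 * π * A1 * (γ - 1) / (4 - 3 * γ) * R0 ^ (-((4 - 3 * γ) / (γ - 1)))) :
    Filter.Tendsto M Filter.atTop (nhds Mstar) ∧
      ∀ R : ℝ, R0 < R → M R < Mstar := by
  have hγ0 : (0:ℝ) < γ - 1 := by linarith
  set p : ℝ := 1 / (γ - 1) with hpdef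
  have hp3 : 3 < p := by rw [hpdef, lt_div_iff₀ hγ0]; linarith
  have hp0 : 0 < p := by linarith
  set c : ℝ := 4 * π * A1 with hc
  have hcpos : 0 < c := by have := Real.pi_pos; positivity
  -- rewrite Mstar
  have hexp : -((4 - 3 * γ) / (γ - 1)) = 3 - p := by
    rw [hpdef]; field_simp; ring
  have hMs : Mstar = c * (R0 ^ (3 - p) / (p - 3)) := by
    rw [hMstar, hexp]
    have h2 : (γ - 1) / (4 - 3 * γ) = 1 / (p - 3) := by
      rw [hpdef]
      rw [div_eq_div_iff (by linarith) (by rw [sub_pos, hpdef] at *; linarith [hp3])]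
      field_simp
      ring
    have : 4 * π * A1 * (γ - 1) / (4 - 3 * γ) = c * ((γ - 1) / (4 - 3 * γ)) := by
      rw [hc]; ring
    rw [this, h2]; ring
  -- integrability helper
  have hintf : ∀ a b R : ℝ, R0 ≤ a → R0 ≤ b →
      IntervalIntegrable (fun r : ℝ => (1 / r - 1 / R) ^ p * r ^ 2) MeasureTheory.volume a b :=
    fun a b R ha hb => ((aux_contf R p hp0).mono (aux_sub hR0 a b ha hb)).intervalIntegrable
  have hintg : ∀ a b : ℝ, R0 ≤ a → R0 ≤ b →
      IntervalIntegrable (fun r : ℝ => r ^ (2 - p)) MeasureTheory.volume a b :=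
    fun a b ha hb => ((aux_contg p).mono (aux_sub hR0 a b ha hb)).intervalIntegrable
  -- the strict inequality part
  have key2 : ∀ R : ℝ, R0 < R → M R < Mstar := by
    intro R hR
    rw [hM R, hMs]
    have hJle : (∫ r in R0..R, (1 / r - 1 / R) ^ p * r ^ 2) ≤ ∫ r in R0..R, r ^ (2 - p) := by
      apply intervalIntegral.integral_mono_on hR.le (hintf R0 R R le_rfl hR.le)
        (hintg R0 R le_rfl hR.le)
      exact fun r hr => aux_ptle hR0 hp0 R r hr
    rw [aux_int hR0 hp3 R hR.le] at hJle
    have hRp : 0 < R ^ (3 - p) := Real.rpow_pos_of_pos (lt_trans hR0 hR) _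
    have hden : 0 < p - 3 := by linarith
    calc c * (∫ r in R0..R, (1 / r - 1 / R) ^ p * r ^ 2)
        ≤ c * ((R0 ^ (3 - p) - R ^ (3 - p)) / (p - 3)) :=
          mul_le_mul_of_nonneg_left hJle hcpos.le
      _ < c * (R0 ^ (3 - p) / (p - 3)) := by
          exact mul_lt_mul_of_pos_left
            ((div_lt_div_iff_of_pos_right hden).mpr (by linarith)) hcpos
  refine ⟨?_, key2⟩
  rw [Metric.tendsto_atTop]
  intro ε hε
  -- choose S with small tail
  have htailto : Filter.Tendsto (fun S : ℝ => c * (S ^ (3 - p) / (p - 3)))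
      Filter.atTop (nhds 0) := by
    have h1 := tendsto_rpow_neg_atTop (show (0:ℝ) < p - 3 by linarith)
    have h2 := (h1.div_const (p - 3)).const_mul c
    simpa [show -(p - 3) = 3 - p by ring] using h2
  obtain ⟨S, hSbig, hSge⟩ := ((htailto.eventually (gt_mem_nhds (half_pos hε))).and
    (Filter.eventually_ge_atTop R0)).exists
  set IS : ℝ := (R0 ^ (3 - p) - S ^ (3 - p)) / (p - 3) with hISdef
  have h2to : Filter.Tendsto (fun R : ℝ => c * p * S * IS / R) Filter.atTop (nhds 0) := by
    have := tendsto_inv_atTop_zero.const_mul (c * p * S * IS)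
    simpa [div_eq_mul_inv, mul_zero] using this
  obtain ⟨N, hN⟩ := Filter.eventually_atTop.mp
    ((h2to.eventually (gt_mem_nhds (half_pos hε))).and
      (Filter.eventually_ge_atTop (max S (R0 + 1))))
  refine ⟨N, fun R hRN => ?_⟩
  obtain ⟨hsmall, hge⟩ := hN R hRN
  have hSR : S ≤ R := le_trans (le_max_left _ _) hge
  have hR0R : R0 < R := lt_of_lt_of_le (by linarith) (le_trans (le_max_right _ _) hge)
  have hRpos : 0 < R := lt_trans hR0 hR0R
  rw [Real.dist_eq, abs_of_nonpos (by linarith [key2 R hR0R]), neg_sub]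
  -- lower bound for M R
  have hsplit : (∫ r in R0..R, (1 / r - 1 / R) ^ p * r ^ 2) =
      (∫ r in R0..S, (1 / r - 1 / R) ^ p * r ^ 2) +
        ∫ r in S..R, (1 / r - 1 / R) ^ p * r ^ 2 :=
    (intervalIntegral.integral_add_adjacent_intervals (hintf R0 S R le_rfl hSge)
      (hintf S R R hSge (by linarith))).symm
  have htail0 : 0 ≤ ∫ r in S..R, (1 / r - 1 / R) ^ p * r ^ 2 := by
    apply intervalIntegral.integral_nonneg hSR
    intro r hr
    have hr0 : 0 < r := lt_of_lt_of_le (lt_of_lt_of_le hR0 hSge) hr.1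
    have h1 : 1 / R ≤ 1 / r := one_div_le_one_div_of_le hr0 hr.2
    exact mul_nonneg (Real.rpow_nonneg (by linarith) _) (sq_nonneg r)
  have hlow : (1 - p * S / R) * IS ≤ ∫ r in R0..S, (1 / r - 1 / R) ^ p * r ^ 2 := by
    have hmono := intervalIntegral.integral_mono_on hSge
      ((hintg R0 S le_rfl hSge).const_mul (1 - p * S / R))
      (hintf R0 S R le_rfl hSge)
      (fun r hr => aux_ptge hR0 (by linarith) S R r hSR hr)
    rwa [intervalIntegral.integral_const_mul, aux_int hR0 hp3 S hSge] at hmono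
  have hMR : c * IS - c * p * S * IS / R ≤ M R := by
    rw [hM R]
    have h1 : (1 - p * S / R) * IS ≤ ∫ r in R0..R, (1 / r - 1 / R) ^ p * r ^ 2 := by
      rw [hsplit]; linarith
    have h2 := mul_le_mul_of_nonneg_left h1 hcpos.le
    have h3 : c * ((1 - p * S / R) * IS) = c * IS - c * p * S * IS / R := by ring
    linarith
  have hMsIS : Mstar - c * IS = c * (S ^ (3 - p) / (p - 3)) := by
    rw [hMs, hISdef]; ring
  linarith
end

section
/- Let $R_0>0$, $A_1>0$ and $4/3\le\gamma\le 2$. Then $M(R)=4\pi A_1\int_{R_0}^{R}(1/r-1/R)^{1/(\gamma-1)}r^2\,dr\to+\infty$ as $R\to\infty$. Consequently, for every $M_0>0$ there exists $R>R_0$ with $M(R)=M_0$. -/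
/-!
For `max R0 1 ≤ r ≤ R / 2` one has `1 / r - 1 / R ≥ 1 / (2 r)`, and this base is at most `1`, so as the
exponent `1 / (γ - 1)` is at most `3` the integrand is at least `r ^ 2 / (2 r) ^ 3 = 1 / (8 r)`.
Hence `M R` grows at least like `log R / 8`. Since `M` is continuous on `[R0, ∞)` and `M R0 = 0`,
the intermediate value theorem yields every positive mass.
-/

open Real

open Filter Set intervalIntegral

noncomputable def massIntegral (R0 α R : ℝ) : ℝ :=
  ∫ r in R0..R, (1 / r - 1 / R) ^ α * r ^ 2

section MassIntegral

variable {R0 α : ℝ}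

theorem continuousOn_massIntegrand (hα : 0 ≤ α) (R : ℝ) :
    ContinuousOn (fun r : ℝ => (1 / r - 1 / R) ^ α * r ^ 2) (Ioi 0) := by
  refine ContinuousOn.mul ?_ (continuousOn_pow 2)
  refine ContinuousOn.rpow_const ?_ fun _ _ => Or.inr hα
  exact (continuousOn_const.div continuousOn_id fun _ hr => hr.ne').sub continuousOn_const

theorem intervalIntegrable_massIntegrand (hα : 0 ≤ α) (R : ℝ) {u v : ℝ} (hu : 0 < u)
    (hv : 0 < v) :
    IntervalIntegrable (fun r : ℝ => (1 / r - 1 / R) ^ α * r ^ 2) MeasureTheory.volume u v :=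
  ((continuousOn_massIntegrand hα R).mono fun _ hr =>
    lt_of_lt_of_le (lt_min hu hv) hr.1).intervalIntegrable

theorem massIntegrand_nonneg {r R : ℝ} (hr : 0 < r) (hrR : r ≤ R) :
    0 ≤ (1 / r - 1 / R) ^ α * r ^ 2 :=
  mul_nonneg (rpow_nonneg (sub_nonneg.2 (one_div_le_one_div_of_le hr hrR)) _) (sq_nonneg r)

theorem inv_eight_mul_le_massIntegrand (hα3 : α ≤ 3) {r R : ℝ} (hr : 1 ≤ r)
    (hrR : 2 * r ≤ R) : (8 * r)⁻¹ ≤ (1 / r - 1 / R) ^ α * r ^ 2 := by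
  set x := 1 / r - 1 / R
  have hx_ge : (2 * r)⁻¹ ≤ x := by
    have : 1 / R ≤ 1 / (2 * r) := one_div_le_one_div_of_le (by linarith) hrR
    have : 1 / r = 2 * (1 / (2 * r)) := by field_simp
    simp only [x, one_div] at *
    linarith
  have hx_le : x ≤ 1 := by
    have : 1 / r ≤ 1 := by rw [div_le_one (by linarith)]; exact hr
    have : 0 ≤ 1 / R := one_div_nonneg.2 (by linarith)
    linarith
  have hx_pos : 0 < x := lt_of_lt_of_le (by positivity) hx_ge
  calc (8 * r)⁻¹ = (2 * r)⁻¹ ^ 3 * r ^ 2 := by field_simp; ring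
    _ ≤ x ^ 3 * r ^ 2 := by gcongr
    _ = x ^ (3 : ℝ) * r ^ 2 := by rw [rpow_ofNat]
    _ ≤ x ^ α * r ^ 2 := by gcongr ?_ * _; exact rpow_le_rpow_of_exponent_ge hx_pos hx_le hα3

theorem continuousOn_massIntegral (hR0 : 0 < R0) (hα : 0 ≤ α) :
    ContinuousOn (massIntegral R0 α) (Ici R0) := by
  -- Clamping both variables at `R0` gives an integrand continuous on all of `ℝ × ℝ`.
  set G : ℝ → ℝ → ℝ := fun R r => ((max r R0)⁻¹ - (max R R0)⁻¹) ^ α * r ^ 2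
  have hG : Continuous (Function.uncurry G) := by
    have hpos : ∀ x : ℝ, max x R0 ≠ 0 := fun x => (lt_max_of_lt_right hR0).ne'
    refine Continuous.mul (Continuous.rpow_const ?_ fun _ => Or.inr hα) (continuous_snd.pow 2)
    exact ((continuous_snd.max continuous_const).inv₀ fun p => hpos p.2).sub
      ((continuous_fst.max continuous_const).inv₀ fun p => hpos p.1)
  refine (continuous_parametric_intervalIntegral_of_continuous hG continuous_id).continuousOn.congr
    fun R hR => integral_congr fun r hr => ?_
  rw [uIcc_of_le (mem_Ici.1 hR)] at hr
  simp only [G, max_eq_left hr.1, max_eq_left (mem_Ici.1 hR), one_div]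

theorem log_div_le_massIntegral (hR0 : 0 < R0) (hα0 : 0 ≤ α) (hα3 : α ≤ 3) {a R : ℝ}
    (ha : 1 ≤ a) (hR0a : R0 ≤ a) (haR : 2 * a ≤ R) :
    log (R / 2 / a) / 8 ≤ massIntegral R0 α R := by
  have ha0 : 0 < a := by linarith
  calc log (R / 2 / a) / 8 = ∫ r in a..R / 2, (8 * r)⁻¹ := by
        simp only [mul_inv, integral_const_mul, integral_inv_of_pos ha0 (by linarith : 0 < R / 2)]
        ring
    _ ≤ ∫ r in a..R / 2, (1 / r - 1 / R) ^ α * r ^ 2 := by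
        refine integral_mono_on (by linarith) ?_ (intervalIntegrable_massIntegrand hα0 R ha0
          (by linarith)) fun r hr => inv_eight_mul_le_massIntegrand hα3 (ha.trans hr.1)
          (by linarith [hr.2])
        refine ContinuousOn.intervalIntegrable ((continuousOn_const.mul continuousOn_id).inv₀
          fun r hr => ?_)
        rw [uIcc_of_le (by linarith)] at hr
        exact mul_ne_zero (by norm_num) (ha0.trans_le hr.1).ne'
    _ ≤ massIntegral R0 α R := by
        refine integral_mono_interval hR0a (by linarith) (by linarith) ?_
          (intervalIntegrable_massIntegrand hα0 R hR0 (by linarith))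
        exact MeasureTheory.ae_restrict_of_forall_mem measurableSet_Ioc fun r hr =>
          massIntegrand_nonneg (hR0.trans hr.1) hr.2

theorem tendsto_massIntegral_atTop (hR0 : 0 < R0) (hα0 : 0 ≤ α) (hα3 : α ≤ 3) :
    Tendsto (massIntegral R0 α) atTop atTop := by
  set a := max R0 1
  refine tendsto_atTop_mono' atTop (eventually_atTop.2 ⟨2 * a, fun R hR =>
    log_div_le_massIntegral hR0 hα0 hα3 (le_max_right R0 1) (le_max_left R0 1) hR⟩) ?_
  exact (tendsto_log_atTop.comp ((tendsto_id.atTop_div_const two_pos).atTop_div_const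
    (lt_max_of_lt_right one_pos))).atTop_div_const (by norm_num)

end MassIntegral

theorem stmt_3_general (R0 A1 γ : ℝ) (M : ℝ → ℝ)
    (hR0 : 0 < R0) (hA1 : 0 < A1) (hγ1 : 4 / 3 ≤ γ)
    (hM : ∀ R : ℝ, M R = 4 * π * A1 * ∫ r in R0..R, (1 / r - 1 / R) ^ (1 / (γ - 1)) * r ^ 2) :
    Filter.Tendsto M Filter.atTop Filter.atTop ∧
      ∀ M0 : ℝ, 0 < M0 → ∃ R : ℝ, R0 < R ∧ M R = M0 := by
  have hα0 : 0 ≤ 1 / (γ - 1) := one_div_nonneg.2 (by linarith)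
  have hα3 : 1 / (γ - 1) ≤ 3 := by rw [div_le_iff₀ (by linarith)]; linarith
  have hM' : M = fun R => 4 * π * A1 * massIntegral R0 (1 / (γ - 1)) R := funext hM
  have htendsto : Tendsto M atTop atTop := hM' ▸
    (tendsto_massIntegral_atTop hR0 hα0 hα3).const_mul_atTop (by positivity)
  refine ⟨htendsto, fun M0 hM0 => ?_⟩
  have hcont : ContinuousOn M (Ici R0) :=
    hM' ▸ continuousOn_const.mul (continuousOn_massIntegral hR0 hα0)
  have hMR0 : M R0 = 0 := by rw [hM, integral_same, mul_zero]
  obtain ⟨R, hR, hMR⟩ := isPreconnected_Ici.intermediate_value_Ici self_mem_Ici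
    (le_principal_iff.2 (Ici_mem_atTop R0)) hcont htendsto (show M R0 ≤ M0 by linarith)
  refine ⟨R, lt_of_le_of_ne hR ?_, hMR⟩
  rintro rfl
  linarith

theorem stmt_3 (R0 A1 γ : ℝ) (M : ℝ → ℝ)
    (hR0 : 0 < R0) (hA1 : 0 < A1) (hγ1 : 4 / 3 ≤ γ) (hγ2 : γ ≤ 2)
    (hM : ∀ R : ℝ, M R = 4 * π * A1 * ∫ r in R0..R, (1 / r - 1 / R) ^ (1 / (γ - 1)) * r ^ 2) :
    Filter.Tendsto M Filter.atTop Filter.atTop ∧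
      ∀ M0 : ℝ, 0 < M0 → ∃ R : ℝ, R0 < R ∧ M R = M0 :=
  stmt_3_general R0 A1 γ M hR0 hA1 hγ1 hM
end

section
/- Let $4\le N\le 8$ and $0<z_R<1$. Suppose $\phi_1\in C^2([0,\xi_R])$ satisfies $-\phi_1''+Q\phi_1=\lambda_1\phi_1$ on $(0,\xi_R)$ with $\phi_1>0$ on $(0,\xi_R)$, $\phi_1(\xi_R)=0$, $\phi_1'(\xi_R)<0$, where $Q$ is the Liouville potential and $\eta_1(\xi)=z^{(N-1)/4}(1-z)^{(9-N)/4}$ (with $z=z(\xi)$) satisfies $-\eta_1''+Q\eta_1=\hat q\ge 0$ on $(0,\xi_R)$, $\eta_1(0)=\eta_1'(0)=0$, $\eta_1>0$ on $(0,\xi_R]$. Then $\lambda_1>0$. -/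
/-!
Suppose `λ₁ ≤ 0`. The Wronskian `W = φ₁' η₁ - φ₁ η₁'` then has derivative
`W' = φ₁'' η₁ - φ₁ η₁'' = q̂ φ₁ - λ₁ φ₁ η₁ ≥ 0` on `(0, ξ_R)`, so `W` is nondecreasing on `[0, ξ_R]`.
But `W(0) = 0` since `η₁` vanishes to first order at `0`, whereas `W(ξ_R) = φ₁'(ξ_R) η₁(ξ_R) < 0`.
-/

open Set

noncomputable def wronskian (f g : ℝ → ℝ) (x : ℝ) : ℝ :=
  deriv f x * g x - f x * deriv g x

theorem hasDerivAt_wronskian {f g : ℝ → ℝ} {x : ℝ}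
    (hf : DifferentiableAt ℝ f x) (hf' : DifferentiableAt ℝ (deriv f) x)
    (hg : DifferentiableAt ℝ g x) (hg' : DifferentiableAt ℝ (deriv g) x) :
    HasDerivAt (wronskian f g) (deriv (deriv f) x * g x - f x * deriv (deriv g) x) x :=
  ((hf'.hasDerivAt.mul hg.hasDerivAt).sub (hf.hasDerivAt.mul hg'.hasDerivAt)).congr_deriv
    (by ring)

theorem monotoneOn_wronskian {f g : ℝ → ℝ} {a b : ℝ} (hf : ContDiff ℝ 2 f) (hg : ContDiff ℝ 2 g)
    (h : ∀ x ∈ Ioo a b, 0 ≤ deriv (deriv f) x * g x - f x * deriv (deriv g) x) :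
    MonotoneOn (wronskian f g) (Icc a b) := by
  have hW : ∀ x, HasDerivAt (wronskian f g)
      (deriv (deriv f) x * g x - f x * deriv (deriv g) x) x := fun x =>
    hasDerivAt_wronskian (hf.differentiable two_ne_zero x) (hf.differentiable_deriv_two x)
      (hg.differentiable two_ne_zero x) (hg.differentiable_deriv_two x)
  refine monotoneOn_of_hasDerivWithinAt_nonneg (convex_Icc a b)
    (fun x _ => (hW x).continuousAt.continuousWithinAt) (fun x _ => (hW x).hasDerivWithinAt) ?_
  rw [interior_Icc]
  exact h

theorem eigenvalue_pos_of_positive_supersolution {φ η Q q : ℝ → ℝ} {a b lam : ℝ} (hab : a < b)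
    (hφ : ContDiff ℝ 2 φ) (hη : ContDiff ℝ 2 η)
    (hφODE : ∀ x ∈ Ioo a b, -deriv (deriv φ) x + Q x * φ x = lam * φ x)
    (hηODE : ∀ x ∈ Ioo a b, -deriv (deriv η) x + Q x * η x = q x)
    (hq : ∀ x ∈ Ioo a b, 0 ≤ q x) (hφpos : ∀ x ∈ Ioo a b, 0 < φ x)
    (hφb : φ b = 0) (hφ'b : deriv φ b < 0)
    (hηa : η a = 0) (hη'a : deriv η a = 0) (hηpos : ∀ x ∈ Ioc a b, 0 < η x) :
    0 < lam := by
  by_contra! hlam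
  have hmono : MonotoneOn (wronskian φ η) (Icc a b) := by
    refine monotoneOn_wronskian hφ hη fun x hx => ?_
    have hW' : deriv (deriv φ) x * η x - φ x * deriv (deriv η) x
        = q x * φ x + (-lam) * (φ x * η x) := by
      linear_combination (-η x) * hφODE x hx + φ x * hηODE x hx
    rw [hW']
    exact add_nonneg (mul_nonneg (hq x hx) (hφpos x hx).le)
      (mul_nonneg (neg_nonneg.2 hlam) (mul_pos (hφpos x hx) (hηpos x (Ioo_subset_Ioc_self hx))).le)
  have hWa : wronskian φ η a = 0 := by simp [wronskian, hηa, hη'a]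
  have hWb : wronskian φ η b < 0 := by
    simpa [wronskian, hφb] using mul_neg_of_neg_of_pos hφ'b (hηpos b ⟨hab, le_rfl⟩)
  have := hmono (left_mem_Icc.2 hab.le) (right_mem_Icc.2 hab.le) hab.le
  linarith

theorem stmt_6_general (ξR lam1 : ℝ) (φ1 η1 Q qhat : ℝ → ℝ)
    (hξRpos : 0 < ξR)
    (hφC2 : ContDiff ℝ 2 φ1) (hηC2 : ContDiff ℝ 2 η1)
    (hφODE : ∀ ξ ∈ Set.Ioo (0 : ℝ) ξR, -(deriv (deriv φ1) ξ) + Q ξ * φ1 ξ = lam1 * φ1 ξ)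
    (hφpos : ∀ ξ ∈ Set.Ioo (0 : ℝ) ξR, 0 < φ1 ξ)
    (hφR : φ1 ξR = 0) (hφ'R : deriv φ1 ξR < 0)
    (hηODE : ∀ ξ ∈ Set.Ioo (0 : ℝ) ξR, -(deriv (deriv η1) ξ) + Q ξ * η1 ξ = qhat ξ)
    (hqpos : ∀ ξ ∈ Set.Ioo (0 : ℝ) ξR, 0 ≤ qhat ξ)
    (hη0 : η1 0 = 0) (hη'0 : deriv η1 0 = 0)
    (hηpos : ∀ ξ ∈ Set.Ioc (0 : ℝ) ξR, 0 < η1 ξ) :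
    0 < lam1 :=
  eigenvalue_pos_of_positive_supersolution hξRpos hφC2 hηC2 hφODE hηODE hqpos hφpos hφR hφ'R
    hη0 hη'0 hηpos

theorem stmt_6 (N zR ξR lam1 : ℝ) (φ1 η1 Q qhat zOf : ℝ → ℝ)
    (hN1 : 4 ≤ N) (hN2 : N ≤ 8) (hzR0 : 0 < zR) (hzR1 : zR < 1)
    (hξR : ξR = ∫ z in (0:ℝ)..zR, Real.sqrt ((1 - z) / z))
    (hξRpos : 0 < ξR)
    (hzOf : ∀ ξ ∈ Set.Ioo (0 : ℝ) ξR, zOf ξ ∈ Set.Ioo (0 : ℝ) 1 ∧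
      Real.sqrt (zOf ξ * (1 - zOf ξ)) + Real.arctan (Real.sqrt (zOf ξ / (1 - zOf ξ))) = ξ)
    (hQ : ∀ ξ ∈ Set.Ioo (0 : ℝ) ξR,
      Q ξ = 1 / (zOf ξ * (1 - zOf ξ) ^ 3) *
        ((N - 1) * (N - 3) / 16 + (7 - 2 * N) / 2 * zOf ξ + 2 * (zOf ξ) ^ 2))
    (hη1def : ∀ ξ ∈ Set.Ioo (0 : ℝ) ξR,
      η1 ξ = (zOf ξ) ^ ((N - 1) / 4) * (1 - zOf ξ) ^ ((9 - N) / 4))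
    (hqhat : ∀ ξ ∈ Set.Ioo (0 : ℝ) ξR,
      qhat ξ = (8 - N) / 2 * (zOf ξ) ^ ((N - 1) / 4) * (1 - zOf ξ) ^ (-((N + 3) / 4)))
    (hφC2 : ContDiff ℝ 2 φ1) (hηC2 : ContDiff ℝ 2 η1)
    (hφODE : ∀ ξ ∈ Set.Ioo (0 : ℝ) ξR, -(deriv (deriv φ1) ξ) + Q ξ * φ1 ξ = lam1 * φ1 ξ)
    (hφpos : ∀ ξ ∈ Set.Ioo (0 : ℝ) ξR, 0 < φ1 ξ)
    (hφR : φ1 ξR = 0) (hφ'R : deriv φ1 ξR < 0)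
    (hηODE : ∀ ξ ∈ Set.Ioo (0 : ℝ) ξR, -(deriv (deriv η1) ξ) + Q ξ * η1 ξ = qhat ξ)
    (hqpos : ∀ ξ ∈ Set.Ioo (0 : ℝ) ξR, 0 ≤ qhat ξ)
    (hη0 : η1 0 = 0) (hη'0 : deriv η1 0 = 0)
    (hηpos : ∀ ξ ∈ Set.Ioc (0 : ℝ) ξR, 0 < η1 ξ) :
    0 < lam1 :=
  stmt_6_general ξR lam1 φ1 η1 Q qhat hξRpos hφC2 hηC2 hφODE hφpos hφR hφ'R hηODE hqpos hη0 hη'0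
    hηpos
end

section
/- Let $N\ge 2$, $\triangle = x\frac{d^2}{dx^2}+\frac{N}{2}\frac{d}{dx}$, and $D=\frac{d}{dx}$. Then for every $m\in\mathbb{N}$ and $y\in C^\infty([0,1])$, $\triangle^m Dy(x) = x^{-\frac{N}{2}-m}\int_0^x \triangle^{m+1}y(x')\,(x')^{\frac{N}{2}+m-1}\,dx'$ for $x\in(0,1]$, and consequently $\|\triangle^m D y\|_{L^\infty(0,1)}\le \frac{1}{\frac{N}{2}+m}\|\triangle^{m+1}y\|_{L^\infty(0,1)}$. -/
noncomputable def lap (N : ℝ) (y : ℝ → ℝ) : ℝ → ℝ :=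
  fun x => x * deriv (deriv y) x + N / 2 * deriv y x

private lemma sm_deriv {f : ℝ → ℝ} (hf : ContDiff ℝ (⊤ : ℕ∞) f) : ContDiff ℝ (⊤ : ℕ∞) (deriv f) :=
  (contDiff_infty_iff_deriv.mp hf).2

private lemma sm_lap {N : ℝ} {f : ℝ → ℝ} (hf : ContDiff ℝ (⊤ : ℕ∞) f) : ContDiff ℝ (⊤ : ℕ∞) (lap N f) := by
  have h1 := sm_deriv hf
  have h2 := sm_deriv h1
  exact (contDiff_id.mul h2).add (contDiff_const.mul h1)

private lemma sm_iter {N : ℝ} {f : ℝ → ℝ} (hf : ContDiff ℝ (⊤ : ℕ∞) f) (m : ℕ) :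
    ContDiff ℝ (⊤ : ℕ∞) ((lap N)^[m] f) := by
  induction m with
  | zero => exact hf
  | succ n ih => rw [Function.iterate_succ_apply']; exact sm_lap ih

private lemma deriv_id_mul {f : ℝ → ℝ} (hf : ContDiff ℝ (⊤ : ℕ∞) f) (x : ℝ) :
    deriv (fun t => t * f t) x = f x + x * deriv f x := by
  have h := (hasDerivAt_id x).fun_mul ((hf.differentiable (by simp) x).hasDerivAt)
  simpa using h.deriv

private lemma lap_add (N : ℝ) {g h : ℝ → ℝ} (hg : ContDiff ℝ (⊤ : ℕ∞) g) (hh : ContDiff ℝ (⊤ : ℕ∞) h)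
    (x : ℝ) : lap N (fun t => g t + h t) x = lap N g x + lap N h x := by
  have dg := hg.differentiable (by simp)
  have dh := hh.differentiable (by simp)
  have dg' := (sm_deriv hg).differentiable (by simp)
  have dh' := (sm_deriv hh).differentiable (by simp)
  have h1 : deriv (fun t => g t + h t) = fun t => deriv g t + deriv h t :=
    funext fun t => deriv_add (dg t) (dh t)
  simp only [lap, h1]
  rw [deriv_fun_add (dg' x) (dh' x)]
  ring

private lemma lap_cmul (N c : ℝ) {h : ℝ → ℝ} (hh : ContDiff ℝ (⊤ : ℕ∞) h) (x : ℝ) :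
    lap N (fun t => c * h t) x = c * lap N h x := by
  have dh := hh.differentiable (by simp)
  have dh' := (sm_deriv hh).differentiable (by simp)
  have h1 : deriv (fun t => c * h t) = fun t => c * deriv h t :=
    funext fun t => deriv_const_mul c (dh t)
  simp only [lap, h1]
  rw [deriv_const_mul c (dh' x)]
  ring

private lemma lap_xD (N : ℝ) {f : ℝ → ℝ} (hf : ContDiff ℝ (⊤ : ℕ∞) f) (x : ℝ) :
    lap N (fun t => t * deriv f t) x = x * deriv (lap N f) x + lap N f x := by
  have h1 := sm_deriv hf
  have h2 := sm_deriv h1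
  have h3 := sm_deriv h2
  have d1 := h1.differentiable (by simp)
  have d2 := h2.differentiable (by simp)
  have d3 := h3.differentiable (by simp)
  have e1 : deriv (fun t => t * deriv f t) = fun t => deriv f t + t * deriv (deriv f) t :=
    funext fun t => deriv_id_mul h1 t
  have e2 : deriv (fun t => deriv f t + t * deriv (deriv f) t) x
      = deriv (deriv f) x + (deriv (deriv f) x + x * deriv (deriv (deriv f)) x) := by
    rw [deriv_fun_add (d1 x) ((differentiable_fun_id.fun_mul d2) x), deriv_id_mul h2]
  have e3 : deriv (lap N f) x
      = (deriv (deriv f) x + x * deriv (deriv (deriv f)) x) + N / 2 * deriv (deriv f) x := by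
    unfold lap
    rw [deriv_fun_add ((differentiable_fun_id.fun_mul d2) x) ((differentiable_const _ |>.fun_mul d1) x),
      deriv_id_mul h2, deriv_const_mul _ (d1 x)]
  simp only [lap, e1, e2, e3]
  ring

private lemma key (N : ℝ) {y : ℝ → ℝ} (hy : ContDiff ℝ (⊤ : ℕ∞) y) (m : ℕ) :
    ∀ x : ℝ, (lap N)^[m + 1] y x
      = x * deriv ((lap N)^[m] (deriv y)) x + (N / 2 + m) * (lap N)^[m] (deriv y) x := by
  induction m with
  | zero => intro x; simp [lap]
  | succ n ih =>
    intro x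
    have hfs : ContDiff ℝ (⊤ : ℕ∞) ((lap N)^[n] (deriv y)) := sm_iter (sm_deriv hy) n
    set f := (lap N)^[n] (deriv y) with hfdef
    have hxf : ContDiff ℝ (⊤ : ℕ∞) (fun t => t * deriv f t) := contDiff_id.mul (sm_deriv hfs)
    have hcf : ContDiff ℝ (⊤ : ℕ∞) (fun t => (N / 2 + (n : ℝ)) * f t) := contDiff_const.mul hfs
    have step : (lap N)^[n + 1 + 1] y x
        = lap N (fun t => t * deriv f t + (N / 2 + (n : ℝ)) * f t) x := by
      rw [Function.iterate_succ_apply']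
      congr 1
      funext t
      exact ih t
    have e1 : lap N (fun t => t * deriv f t + (N / 2 + (n : ℝ)) * f t) x
        = lap N (fun t => t * deriv f t) x + lap N (fun t => (N / 2 + (n : ℝ)) * f t) x :=
      lap_add N hxf hcf x
    have e2 := lap_cmul N (N / 2 + (n : ℝ)) hfs x
    have e3 := lap_xD N hfs x
    have e4 : lap N f = (lap N)^[n + 1] (deriv y) := (Function.iterate_succ_apply' _ _ _).symm
    rw [step, e1, e2, e3, e4]
    push_cast
    ring

theorem stmt_9 (N : ℝ) (hN : 2 ≤ N) (m : ℕ) (y : ℝ → ℝ) (hy : ContDiff ℝ (⊤ : ℕ∞) y) :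
    (∀ x ∈ Set.Ioc (0 : ℝ) 1,
      (lap N)^[m] (deriv y) x =
        x ^ (-(N / 2) - m) *
          ∫ t in (0:ℝ)..x, (lap N)^[m + 1] y t * t ^ (N / 2 + m - 1)) ∧
    (∀ C : ℝ, (∀ t ∈ Set.Icc (0 : ℝ) 1, |(lap N)^[m + 1] y t| ≤ C) →
      ∀ x ∈ Set.Icc (0 : ℝ) 1, |(lap N)^[m] (deriv y) x| ≤ C / (N / 2 + m)) := by
  have hy' : ContDiff ℝ (⊤ : ℕ∞) y := hy.of_le (by simp)
  have hm0 : (0 : ℝ) ≤ m := Nat.cast_nonneg m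
  have ha1 : (1 : ℝ) ≤ N / 2 + m := by linarith
  have ha0 : (0 : ℝ) < N / 2 + m := by linarith
  have hfs : ContDiff ℝ (⊤ : ℕ∞) ((lap N)^[m] (deriv y)) := sm_iter (sm_deriv hy') m
  have hgcont : Continuous (fun t : ℝ => (lap N)^[m + 1] y t * t ^ (N / 2 + m - 1)) := by
    have h1 : Continuous ((lap N)^[m + 1] y) := (sm_iter hy' (m + 1)).continuous
    exact h1.mul (Real.continuous_rpow_const (by linarith))
  -- Main integral identity
  have hID : ∀ x : ℝ, 0 < x →
      (∫ t in (0:ℝ)..x, (lap N)^[m + 1] y t * t ^ (N / 2 + m - 1))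
        = x ^ (N / 2 + (m : ℝ)) * (lap N)^[m] (deriv y) x := by
    intro x hx
    have hcontF : ContinuousOn (fun t : ℝ => t ^ (N / 2 + (m : ℝ)) * (lap N)^[m] (deriv y) t)
        (Set.Icc 0 x) :=
      ((Real.continuous_rpow_const (by linarith)).mul hfs.continuous).continuousOn
    have hF : ∀ t ∈ Set.Ioo (0:ℝ) x,
        HasDerivAt (fun t : ℝ => t ^ (N / 2 + (m : ℝ)) * (lap N)^[m] (deriv y) t)
          ((lap N)^[m + 1] y t * t ^ (N / 2 + m - 1)) t := by
      intro t ht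
      have h1 : HasDerivAt (fun t : ℝ => t ^ (N / 2 + (m : ℝ)))
          ((N / 2 + (m : ℝ)) * t ^ (N / 2 + (m : ℝ) - 1)) t :=
        Real.hasDerivAt_rpow_const (Or.inl (ne_of_gt ht.1))
      have h2 : HasDerivAt ((lap N)^[m] (deriv y)) (deriv ((lap N)^[m] (deriv y)) t) t :=
        (hfs.differentiable (by simp) t).hasDerivAt
      have h3 := h1.fun_mul h2
      refine h3.congr_deriv (Eq.symm ?_)
      have hk := key N hy' m t
      rw [hk]
      have ht1 : t ^ (N / 2 + (m : ℝ) - 1) * t = t ^ (N / 2 + (m : ℝ)) := by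
        rw [← Real.rpow_add_one (ne_of_gt ht.1)]
        congr 1
        ring
      rw [← ht1]
      ring
    have hint : IntervalIntegrable (fun t : ℝ => (lap N)^[m + 1] y t * t ^ (N / 2 + m - 1))
        MeasureTheory.volume 0 x := hgcont.intervalIntegrable 0 x
    rw [intervalIntegral.integral_eq_sub_of_hasDerivAt_of_le hx.le hcontF hF hint]
    rw [Real.zero_rpow (by linarith : N / 2 + (m : ℝ) ≠ 0), zero_mul, sub_zero]
  have part1 : ∀ x ∈ Set.Ioc (0 : ℝ) 1,
      (lap N)^[m] (deriv y) x =
        x ^ (-(N / 2) - m) *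
          ∫ t in (0:ℝ)..x, (lap N)^[m + 1] y t * t ^ (N / 2 + m - 1) := by
    intro x hx
    rw [hID x hx.1, ← mul_assoc, ← Real.rpow_add hx.1,
      show -(N / 2) - (m : ℝ) + (N / 2 + m) = 0 by ring, Real.rpow_zero, one_mul]
  refine ⟨part1, ?_⟩
  intro C hC x hx
  have hC0 : 0 ≤ C := le_trans (abs_nonneg _) (hC 0 ⟨le_rfl, zero_le_one⟩)
  rcases eq_or_lt_of_le hx.1 with h0 | hxpos
  · -- x = 0
    have hk := key N hy' m 0
    rw [zero_mul, zero_add] at hk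
    have hb : |(N / 2 + (m : ℝ)) * (lap N)^[m] (deriv y) 0| ≤ C := by
      rw [← hk]; exact hC 0 ⟨le_rfl, zero_le_one⟩
    rw [abs_mul, abs_of_pos ha0] at hb
    rw [← h0, le_div_iff₀ ha0]
    linarith
  · -- x > 0
    rw [part1 x ⟨hxpos, hx.2⟩]
    have hxa : (0:ℝ) < x ^ (N / 2 + (m : ℝ)) := Real.rpow_pos_of_pos hxpos _
    have hInt1 : IntervalIntegrable (fun t : ℝ => (lap N)^[m + 1] y t * t ^ (N / 2 + m - 1))
        MeasureTheory.volume 0 x := hgcont.intervalIntegrable 0 x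
    have hInt2 : IntervalIntegrable (fun t : ℝ => C * t ^ (N / 2 + m - 1))
        MeasureTheory.volume 0 x :=
      (continuous_const.mul (Real.continuous_rpow_const (by linarith))).intervalIntegrable 0 x
    have habs : |∫ t in (0:ℝ)..x, (lap N)^[m + 1] y t * t ^ (N / 2 + m - 1)|
        ≤ ∫ t in (0:ℝ)..x, |(lap N)^[m + 1] y t * t ^ (N / 2 + m - 1)| :=
      intervalIntegral.abs_integral_le_integral_abs hxpos.le
    have hmono : (∫ t in (0:ℝ)..x, |(lap N)^[m + 1] y t * t ^ (N / 2 + m - 1)|)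
        ≤ ∫ t in (0:ℝ)..x, C * t ^ (N / 2 + m - 1) := by
      apply intervalIntegral.integral_mono_on hxpos.le hInt1.abs hInt2
      intro t ht
      rw [abs_mul, abs_of_nonneg (Real.rpow_nonneg ht.1 _)]
      exact mul_le_mul_of_nonneg_right (hC t ⟨ht.1, ht.2.trans hx.2⟩)
        (Real.rpow_nonneg ht.1 _)
    have hval : (∫ t in (0:ℝ)..x, C * t ^ (N / 2 + m - 1))
        = C * (x ^ (N / 2 + (m : ℝ)) / (N / 2 + m)) := by
      rw [intervalIntegral.integral_const_mul,
        integral_rpow (Or.inl (by linarith : (-1:ℝ) < N / 2 + m - 1))]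
      rw [Real.zero_rpow (by intro h; rw [show N / 2 + (m:ℝ) - 1 + 1 = N / 2 + m by ring] at h; exact (ne_of_gt ha0) h)]
      rw [show N / 2 + (m:ℝ) - 1 + 1 = N / 2 + m by ring]
      ring
    have hxneg : x ^ (-(N / 2) - (m : ℝ)) = (x ^ (N / 2 + (m : ℝ)))⁻¹ := by
      rw [show -(N / 2) - (m : ℝ) = -(N / 2 + m) by ring, Real.rpow_neg hxpos.le]
    rw [abs_mul, hxneg, abs_of_pos (inv_pos.mpr hxa)]
    calc (x ^ (N / 2 + (m : ℝ)))⁻¹ * |∫ t in (0:ℝ)..x, (lap N)^[m + 1] y t * t ^ (N / 2 + m - 1)|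
        ≤ (x ^ (N / 2 + (m : ℝ)))⁻¹ * (C * (x ^ (N / 2 + (m : ℝ)) / (N / 2 + m))) := by
          apply mul_le_mul_of_nonneg_left _ (inv_pos.mpr hxa).le
          exact le_trans habs (le_of_le_of_eq hmono hval)
      _ = C / (N / 2 + m) := by
          field_simp
end

section
/- Let $N\ge 2$, $k\in\mathbb{N}$, $\dot D=\sqrt{x}\frac{d}{dx}$, $D=\frac{d}{dx}$, $\triangle=xD^2+\frac{N}{2}D$. Then for every $y\in C^\infty([0,1])$ and $x\in(0,1]$: $\dot D^k D y(x)=x^{-\frac{N+k}{2}}\int_0^x \dot D^k\triangle y(x')\,(x')^{\frac{N+k}{2}-1}dx'$, and consequently $\|\dot D^k D y\|_{L^\infty}\le \frac{2}{k+1}\|\dot D^{k+2}y\|_{L^\infty}$. -/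
open Set Filter MeasureTheory Topology

noncomputable def dotD (y : ℝ → ℝ) : ℝ → ℝ :=
  fun x => Real.sqrt x * deriv y x

lemma smooth_iter {V : ℝ → ℝ} (hV : ContDiff ℝ (⊤ : ℕ∞) V) (n : ℕ) :
    ContDiff ℝ (⊤ : ℕ∞) (iteratedDeriv n V) := by
  rw [iteratedDeriv_eq_iterate]; exact hV.iterate_deriv n

lemma hasDerivAt_iter {V : ℝ → ℝ} (hV : ContDiff ℝ (⊤ : ℕ∞) V) (n : ℕ) (ξ : ℝ) :
    HasDerivAt (iteratedDeriv n V) (iteratedDeriv (n+1) V ξ) ξ := by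
  rw [iteratedDeriv_succ]
  exact ((smooth_iter hV n).differentiable (by simp) ξ).hasDerivAt

lemma iter_mulx {V : ℝ → ℝ} (hV : ContDiff ℝ (⊤ : ℕ∞) V) (k : ℕ) :
    iteratedDeriv (k+1) (fun ξ => ξ * V ξ) =
      fun ξ => (k+1) * iteratedDeriv k V ξ + ξ * iteratedDeriv (k+1) V ξ := by
  induction k with
  | zero =>
    rw [iteratedDeriv_one]
    funext ξ
    have h : HasDerivAt (fun ξ : ℝ => ξ * V ξ) (1 * V ξ + ξ * deriv V ξ) ξ :=
      (hasDerivAt_id ξ).mul ((hV.differentiable (by simp) ξ).hasDerivAt)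
    simp [h.deriv, iteratedDeriv_zero, iteratedDeriv_one]
  | succ k ih =>
    rw [iteratedDeriv_succ, ih]
    funext ξ
    have h1 : HasDerivAt (fun ξ : ℝ => (k+1 : ℝ) * iteratedDeriv k V ξ)
        ((k+1 : ℝ) * iteratedDeriv (k+1) V ξ) ξ := (hasDerivAt_iter hV k ξ).const_mul _
    have h2 : HasDerivAt (fun ξ : ℝ => ξ * iteratedDeriv (k+1) V ξ)
        (1 * iteratedDeriv (k+1) V ξ + ξ * iteratedDeriv (k+2) V ξ) ξ :=
      (hasDerivAt_id ξ).mul (hasDerivAt_iter hV (k+1) ξ)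
    have := (show HasDerivAt (fun ξ : ℝ => (k+1 : ℝ) * iteratedDeriv k V ξ + ξ * iteratedDeriv (k+1) V ξ) _ ξ from h1.add h2).deriv
    rw [this]
    push_cast
    ring

lemma dotD_iter_eq {w : ℝ → ℝ} (hw : ContDiff ℝ (⊤:ℕ∞) w) (k : ℕ) :
    ∀ x : ℝ, 0 < x →
    dotD^[k] w x = iteratedDeriv k (fun ξ => w (ξ^2/4)) (2 * Real.sqrt x) := by
  have hsq : ContDiff ℝ (⊤:ℕ∞) (fun ξ : ℝ => ξ^2/4) := (contDiff_id.pow 2).div_const 4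
  have hW : ContDiff ℝ (⊤:ℕ∞) (fun ξ => w (ξ^2/4)) := hw.comp hsq
  induction k with
  | zero =>
    intro x hx
    simp only [Function.iterate_zero, id, iteratedDeriv_zero]
    congr 1
    rw [mul_pow, Real.sq_sqrt hx.le]
    norm_num
  | succ k ih =>
    intro x hx
    rw [Function.iterate_succ_apply']
    have hsx : Real.sqrt x ≠ 0 := (Real.sqrt_pos.mpr hx).ne'
    have hder : HasDerivAt (fun x => iteratedDeriv k (fun ξ => w (ξ^2/4)) (2 * Real.sqrt x))
        (iteratedDeriv (k+1) (fun ξ => w (ξ^2/4)) (2 * Real.sqrt x) * (2 * (1/(2*Real.sqrt x)))) x :=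
      (hasDerivAt_iter hW k _).comp x ((Real.hasDerivAt_sqrt hx.ne').const_mul 2)
    have heq : deriv (dotD^[k] w) x =
        iteratedDeriv (k+1) (fun ξ => w (ξ^2/4)) (2 * Real.sqrt x) * (2 * (1/(2*Real.sqrt x))) := by
      rw [← hder.deriv]
      apply Filter.EventuallyEq.deriv_eq
      filter_upwards [Ioi_mem_nhds hx] with t ht using ih t ht
    show Real.sqrt x * deriv (dotD^[k] w) x = _
    rw [heq]
    field_simp

lemma iter_L {U : ℝ → ℝ} (hU : ContDiff ℝ (⊤:ℕ∞) U) (c : ℝ) (k : ℕ) :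
    iteratedDeriv k (fun ξ => ξ/2 * deriv U ξ + c/2 * U ξ) =
      fun ξ => (c+k)/2 * iteratedDeriv k U ξ + ξ/2 * iteratedDeriv (k+1) U ξ := by
  induction k with
  | zero =>
    funext ξ
    simp only [iteratedDeriv_zero, Nat.cast_zero, zero_add, iteratedDeriv_one]
    ring
  | succ k ih =>
    rw [iteratedDeriv_succ, ih]
    funext ξ
    have h1 : HasDerivAt (fun ξ : ℝ => (c+k)/2 * iteratedDeriv k U ξ)
        ((c+k)/2 * iteratedDeriv (k+1) U ξ) ξ := (hasDerivAt_iter hU k ξ).const_mul _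
    have h2 : HasDerivAt (fun ξ : ℝ => ξ/2 * iteratedDeriv (k+1) U ξ)
        ((1/2) * iteratedDeriv (k+1) U ξ + ξ/2 * iteratedDeriv (k+2) U ξ) ξ := by
      have := ((hasDerivAt_id ξ).div_const 2).mul (hasDerivAt_iter hU (k+1) ξ)
      exact this
    rw [(show HasDerivAt (fun ξ : ℝ => (c+k)/2 * iteratedDeriv k U ξ + ξ/2 * iteratedDeriv (k+1) U ξ) _ ξ from h1.add h2).deriv]
    push_cast
    ring

theorem stmt_10 (N : ℝ) (hN : 2 ≤ N) (k : ℕ) (y : ℝ → ℝ) (hy : ContDiff ℝ (⊤ : ℕ∞) y) :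
    (∀ x ∈ Set.Ioc (0 : ℝ) 1,
      dotD^[k] (deriv y) x =
        x ^ (-((N + k) / 2)) *
          ∫ t in (0:ℝ)..x, dotD^[k] (lap N y) t * t ^ ((N + k) / 2 - 1)) ∧
    (∀ C : ℝ, (∀ t ∈ Set.Icc (0 : ℝ) 1, |dotD^[k + 2] y t| ≤ C) →
      ∀ x ∈ Set.Icc (0 : ℝ) 1, |dotD^[k] (deriv y) x| ≤ 2 / (k + 1) * C) := by
  have hy' : ContDiff ℝ (⊤:ℕ∞) y := hy.of_le (by simp)
  have hsq : ContDiff ℝ (⊤:ℕ∞) (fun ξ : ℝ => ξ^2/4) := (contDiff_id.pow 2).div_const 4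
  have hdy : ContDiff ℝ (⊤:ℕ∞) (deriv y) := (contDiff_infty_iff_deriv.mp hy').2
  have hddy : ContDiff ℝ (⊤:ℕ∞) (deriv (deriv y)) := (contDiff_infty_iff_deriv.mp hdy).2
  have hU : ContDiff ℝ (⊤:ℕ∞) (fun ξ : ℝ => deriv y (ξ^2/4)) := hdy.comp hsq
  have hlap : ContDiff ℝ (⊤:ℕ∞) (lap N y) := by
    unfold lap; exact (contDiff_id.mul hddy).add (contDiff_const.mul hdy)
  have hsq' : ∀ ξ : ℝ, HasDerivAt (fun ξ : ℝ => ξ^2/4) (ξ/2) ξ := by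
    intro ξ
    have := (hasDerivAt_pow 2 ξ).div_const 4
    refine this.congr_deriv ?_
    push_cast; ring
  have hLeq : (fun ξ => lap N y (ξ^2/4)) =
      fun ξ => ξ/2 * deriv (fun ξ : ℝ => deriv y (ξ^2/4)) ξ + N/2 * deriv y (ξ^2/4) := by
    funext ξ
    have hdU : HasDerivAt (fun ξ : ℝ => deriv y (ξ^2/4)) (deriv (deriv y) (ξ^2/4) * (ξ/2)) ξ :=
      ((hdy.differentiable (by simp) _).hasDerivAt).comp ξ (hsq' ξ)
    rw [hdU.deriv]
    show (ξ^2/4) * deriv (deriv y) (ξ^2/4) + N/2 * deriv y (ξ^2/4) = _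
    ring
  have hLk : ∀ ξ : ℝ, iteratedDeriv k (fun ξ => lap N y (ξ^2/4)) ξ
      = (N+k)/2 * iteratedDeriv k (fun ξ : ℝ => deriv y (ξ^2/4)) ξ
        + ξ/2 * iteratedDeriv (k+1) (fun ξ : ℝ => deriv y (ξ^2/4)) ξ := by
    intro ξ; rw [hLeq, iter_L hU N k]
  have hgk : ∀ t : ℝ, 0 < t → dotD^[k] (lap N y) t
      = (N+k)/2 * iteratedDeriv k (fun ξ : ℝ => deriv y (ξ^2/4)) (2*Real.sqrt t)
        + Real.sqrt t * iteratedDeriv (k+1) (fun ξ : ℝ => deriv y (ξ^2/4)) (2*Real.sqrt t) := by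
    intro t ht
    rw [dotD_iter_eq hlap k t ht, hLk]
    ring
  have huk : ∀ t : ℝ, 0 < t →
      dotD^[k] (deriv y) t = iteratedDeriv k (fun ξ : ℝ => deriv y (ξ^2/4)) (2*Real.sqrt t) :=
    fun t ht => dotD_iter_eq hdy k t ht
  set m : ℝ := (N + (k:ℝ))/2 with hm
  have hm1 : 1 ≤ m := by
    rw [hm]; have : (0:ℝ) ≤ k := Nat.cast_nonneg k; linarith
  have hm0 : 0 < m := lt_of_lt_of_le one_pos hm1
  set h : ℝ → ℝ := fun t => ((N+k)/2 * iteratedDeriv k (fun ξ : ℝ => deriv y (ξ^2/4)) (2*Real.sqrt t)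
      + Real.sqrt t * iteratedDeriv (k+1) (fun ξ : ℝ => deriv y (ξ^2/4)) (2*Real.sqrt t)) * t ^ (m-1)
    with hhdef
  have hrp : Continuous (fun t : ℝ => t ^ (m-1)) :=
    continuous_iff_continuousAt.mpr fun t => Real.continuousAt_rpow_const t (m-1) (Or.inr (by linarith))
  have hrpm : Continuous (fun t : ℝ => t ^ m) :=
    continuous_iff_continuousAt.mpr fun t => Real.continuousAt_rpow_const t m (Or.inr (by linarith))
  have hcsq : Continuous fun t : ℝ => 2 * Real.sqrt t := continuous_const.mul Real.continuous_sqrt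
  have hcUk : Continuous fun t : ℝ => iteratedDeriv k (fun ξ : ℝ => deriv y (ξ^2/4)) (2*Real.sqrt t) :=
    ((smooth_iter hU k).continuous).comp hcsq
  have hcUk1 : Continuous fun t : ℝ => iteratedDeriv (k+1) (fun ξ : ℝ => deriv y (ξ^2/4)) (2*Real.sqrt t) :=
    ((smooth_iter hU (k+1)).continuous).comp hcsq
  have hch : Continuous h := by
    rw [hhdef]
    exact ((continuous_const.mul hcUk).add (Real.continuous_sqrt.mul hcUk1)).mul hrp
  have hF : ∀ x : ℝ, 0 < x → (∫ t in (0:ℝ)..x, h t)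
      = x ^ m * iteratedDeriv k (fun ξ : ℝ => deriv y (ξ^2/4)) (2*Real.sqrt x) := by
    intro x hx
    have hFTC := intervalIntegral.integral_eq_sub_of_hasDeriv_right_of_le hx.le
      (f := fun t : ℝ => t ^ m * iteratedDeriv k (fun ξ : ℝ => deriv y (ξ^2/4)) (2*Real.sqrt t))
      (f' := h) ((hrpm.mul hcUk).continuousOn) ?_ (hch.intervalIntegrable 0 x)
    · rw [hFTC]
      simp only [Real.zero_rpow hm0.ne', zero_mul, sub_zero]
    · intro t ht
      have hst : Real.sqrt t ≠ 0 := (Real.sqrt_pos.mpr ht.1).ne'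
      have hA : HasDerivAt (fun t : ℝ => t ^ m) (m * t^(m-1)) t :=
        Real.hasDerivAt_rpow_const (Or.inl ht.1.ne')
      have hB : HasDerivAt (fun t : ℝ => iteratedDeriv k (fun ξ : ℝ => deriv y (ξ^2/4)) (2*Real.sqrt t))
          (iteratedDeriv (k+1) (fun ξ : ℝ => deriv y (ξ^2/4)) (2*Real.sqrt t) * (2 * (1/(2*Real.sqrt t)))) t :=
        (hasDerivAt_iter hU k _).comp t ((Real.hasDerivAt_sqrt ht.1.ne').const_mul 2)
      have key : m * t^(m-1) * iteratedDeriv k (fun ξ : ℝ => deriv y (ξ^2/4)) (2*Real.sqrt t)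
          + t ^ m * (iteratedDeriv (k+1) (fun ξ : ℝ => deriv y (ξ^2/4)) (2*Real.sqrt t) * (2 * (1/(2*Real.sqrt t))))
          = h t := by
        rw [hhdef]
        have h2 : t ^ m = t^(m-1) * (Real.sqrt t * Real.sqrt t) := by
          rw [Real.mul_self_sqrt ht.1.le, ← Real.rpow_add_one ht.1.ne']
          norm_num
        rw [h2]
        field_simp
        ring
      exact key ▸ ((hA.mul hB).hasDerivWithinAt)
  have hIeq : ∀ x : ℝ, 0 < x →
      (∫ t in (0:ℝ)..x, dotD^[k] (lap N y) t * t ^ (m-1)) = ∫ t in (0:ℝ)..x, h t := by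
    intro x hx
    apply intervalIntegral.integral_congr_ae
    apply ae_of_all
    intro t ht
    rw [Set.uIoc_of_le hx.le] at ht
    rw [hgk t ht.1, hhdef]
  have part1 : ∀ x ∈ Set.Ioc (0:ℝ) 1, dotD^[k] (deriv y) x =
      x ^ (-m) * ∫ t in (0:ℝ)..x, dotD^[k] (lap N y) t * t ^ (m-1) := by
    intro x hx
    rw [hIeq x hx.1, hF x hx.1, huk x hx.1, ← mul_assoc, ← Real.rpow_add hx.1,
      neg_add_cancel, Real.rpow_zero, one_mul]
  refine ⟨part1, ?_⟩
  intro C hC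
  have hC0 : 0 ≤ C := le_trans (abs_nonneg _) (hC 0 ⟨le_refl 0, zero_le_one⟩)
  -- derivative of Y = y ∘ sq
  have hdY : deriv (fun ξ : ℝ => y (ξ^2/4)) = fun ξ : ℝ => ξ * (deriv y (ξ^2/4) / 2) := by
    funext ξ
    have hdu : HasDerivAt (fun ξ : ℝ => y (ξ^2/4)) (deriv y (ξ^2/4) * (ξ/2)) ξ :=
      ((hy'.differentiable (by simp) _).hasDerivAt).comp ξ (hsq' ξ)
    rw [hdu.deriv]; ring
  have hUd2 : ∀ n : ℕ, iteratedDeriv n (fun ξ : ℝ => deriv y (ξ^2/4) / 2)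
      = fun ξ => iteratedDeriv n (fun ξ : ℝ => deriv y (ξ^2/4)) ξ / 2 := by
    intro n
    induction n with
    | zero => funext ξ; simp
    | succ n ih =>
      rw [iteratedDeriv_succ, ih, iteratedDeriv_succ]
      funext ξ
      rw [deriv_div_const]
  have hYk2 : ∀ ξ : ℝ, iteratedDeriv (k+2) (fun ξ : ℝ => y (ξ^2/4)) ξ
      = ((k:ℝ)+1)/2 * iteratedDeriv k (fun ξ : ℝ => deriv y (ξ^2/4)) ξ
        + ξ/2 * iteratedDeriv (k+1) (fun ξ : ℝ => deriv y (ξ^2/4)) ξ := by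
    intro ξ
    have e1 : iteratedDeriv (k+2) (fun ξ : ℝ => y (ξ^2/4))
        = iteratedDeriv (k+1) (deriv (fun ξ : ℝ => y (ξ^2/4))) := iteratedDeriv_succ'
    rw [e1, hdY, iter_mulx (hU.div_const 2) k, hUd2 k, hUd2 (k+1)]
    push_cast
    ring
  have hbound : ∀ t ∈ Set.Ioc (0:ℝ) 1,
      |((k:ℝ)+1)/2 * iteratedDeriv k (fun ξ : ℝ => deriv y (ξ^2/4)) (2*Real.sqrt t)
        + Real.sqrt t * iteratedDeriv (k+1) (fun ξ : ℝ => deriv y (ξ^2/4)) (2*Real.sqrt t)| ≤ C := by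
    intro t ht
    have hct := hC t ⟨ht.1.le, ht.2⟩
    rw [dotD_iter_eq hy' (k+2) t ht.1, hYk2] at hct
    have e2 : (2*Real.sqrt t)/2 = Real.sqrt t := by ring
    rw [e2] at hct
    exact hct
  -- maximum of |iteratedDeriv k U| on [0,2]
  obtain ⟨ξ0, hξ0, hmax⟩ := (isCompact_Icc (a := (0:ℝ)) (b := 2)).exists_isMaxOn
    (Set.nonempty_Icc.mpr (by norm_num))
    ((smooth_iter hU k).continuous.abs.continuousOn)
  set M := |iteratedDeriv k (fun ξ : ℝ => deriv y (ξ^2/4)) ξ0| with hMdef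
  have hM : ∀ ξ ∈ Set.Icc (0:ℝ) 2, |iteratedDeriv k (fun ξ : ℝ => deriv y (ξ^2/4)) ξ| ≤ M :=
    fun ξ hξ => hmax hξ
  have hM0 : 0 ≤ M := abs_nonneg _
  have hN1 : (0:ℝ) ≤ (N-1)/2 := by linarith
  -- key integral bound
  have hIbound : ∀ x ∈ Set.Ioc (0:ℝ) 1,
      |iteratedDeriv k (fun ξ : ℝ => deriv y (ξ^2/4)) (2*Real.sqrt x)| ≤ (C + (N-1)/2 * M)/m := by
    intro x hx
    have e1 := part1 x hx
    rw [huk x hx.1, hIeq x hx.1] at e1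
    have hxm : (0:ℝ) < x ^ m := Real.rpow_pos_of_pos hx.1 m
    have habs : |∫ t in (0:ℝ)..x, h t| ≤ (C + (N-1)/2 * M) * x ^ m / m := by
      have hi1 : ∀ t ∈ Set.Ioc (0:ℝ) x, |h t| ≤ (C + (N-1)/2 * M) * t ^ (m-1) := by
        intro t ht
        have h2s : 2 * Real.sqrt t ∈ Set.Icc (0:ℝ) 2 := by
          constructor
          · positivity
          · nlinarith [Real.sqrt_le_one.mpr (le_trans ht.2 hx.2), Real.sqrt_nonneg t]
        have hb1 := hbound t ⟨ht.1, le_trans ht.2 hx.2⟩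
        have hb2 := hM _ h2s
        rw [hhdef]
        simp only []
        rw [abs_mul, abs_of_nonneg (Real.rpow_nonneg ht.1.le _)]
        apply mul_le_mul_of_nonneg_right _ (Real.rpow_nonneg ht.1.le _)
        have hsplit : (N+(k:ℝ))/2 * iteratedDeriv k (fun ξ : ℝ => deriv y (ξ^2/4)) (2*Real.sqrt t)
            + Real.sqrt t * iteratedDeriv (k+1) (fun ξ : ℝ => deriv y (ξ^2/4)) (2*Real.sqrt t)
            = (((k:ℝ)+1)/2 * iteratedDeriv k (fun ξ : ℝ => deriv y (ξ^2/4)) (2*Real.sqrt t)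
              + Real.sqrt t * iteratedDeriv (k+1) (fun ξ : ℝ => deriv y (ξ^2/4)) (2*Real.sqrt t))
              + (N-1)/2 * iteratedDeriv k (fun ξ : ℝ => deriv y (ξ^2/4)) (2*Real.sqrt t) := by
          ring
        rw [hsplit]
        refine le_trans (abs_add_le _ _) ?_
        have : |(N-1)/2 * iteratedDeriv k (fun ξ : ℝ => deriv y (ξ^2/4)) (2*Real.sqrt t)|
            ≤ (N-1)/2 * M := by
          rw [abs_mul, abs_of_nonneg hN1]
          exact mul_le_mul_of_nonneg_left hb2 hN1
        linarith
      have hint1 : MeasureTheory.IntegrableOn h (Set.Ioc 0 x) := hch.integrableOn_Ioc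
      have hint2 : MeasureTheory.IntegrableOn (fun t : ℝ => (C + (N-1)/2 * M) * t ^ (m-1))
          (Set.Ioc 0 x) := (continuous_const.mul hrp).integrableOn_Ioc
      calc |∫ t in (0:ℝ)..x, h t| ≤ ∫ t in (0:ℝ)..x, |h t| :=
            intervalIntegral.abs_integral_le_integral_abs hx.1.le
        _ = ∫ t in Set.Ioc (0:ℝ) x, |h t| := intervalIntegral.integral_of_le hx.1.le
        _ ≤ ∫ t in Set.Ioc (0:ℝ) x, (C + (N-1)/2 * M) * t ^ (m-1) :=
            MeasureTheory.setIntegral_mono_on hint1.abs hint2 measurableSet_Ioc hi1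
        _ = ∫ t in (0:ℝ)..x, (C + (N-1)/2 * M) * t ^ (m-1) :=
            (intervalIntegral.integral_of_le hx.1.le).symm
        _ = (C + (N-1)/2 * M) * x ^ m / m := by
            rw [intervalIntegral.integral_const_mul, integral_rpow (Or.inl (by linarith))]
            rw [show m - 1 + 1 = m by ring, Real.zero_rpow hm0.ne']
            ring
    have e2 : |iteratedDeriv k (fun ξ : ℝ => deriv y (ξ^2/4)) (2*Real.sqrt x)|
        = x^(-m) * |∫ t in (0:ℝ)..x, h t| := by
      rw [e1, abs_mul, abs_of_nonneg (Real.rpow_nonneg hx.1.le _)]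
    rw [e2]
    calc x^(-m) * |∫ t in (0:ℝ)..x, h t| ≤ x^(-m) * ((C + (N-1)/2 * M) * x ^ m / m) :=
          mul_le_mul_of_nonneg_left habs (Real.rpow_nonneg hx.1.le _)
      _ = (C + (N-1)/2 * M)/m := by
          rw [Real.rpow_neg hx.1.le]
          field_simp
  -- inequality from ξ in (0,2]
  have hIo : ∀ ξ ∈ Set.Ioc (0:ℝ) 2,
      |iteratedDeriv k (fun ξ : ℝ => deriv y (ξ^2/4)) ξ| ≤ (C + (N-1)/2 * M)/m := by
    intro ξ hξ
    have hx : ξ^2/4 ∈ Set.Ioc (0:ℝ) 1 := by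
      constructor
      · exact div_pos (pow_pos hξ.1 2) (by norm_num)
      · nlinarith [hξ.1, hξ.2]
    have := hIbound _ hx
    have e3 : 2*Real.sqrt (ξ^2/4) = ξ := by
      rw [show ξ^2/4 = (ξ/2)^2 by ring, Real.sqrt_sq (by linarith [hξ.1] : (0:ℝ) ≤ ξ/2)]
      ring
    rwa [e3] at this
  have hM_le : M ≤ (C + (N-1)/2 * M)/m := by
    rcases eq_or_lt_of_le hξ0.1 with h0 | h0
    · have hcont : Filter.Tendsto (fun ξ => |iteratedDeriv k (fun ξ : ℝ => deriv y (ξ^2/4)) ξ|)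
          (nhdsWithin 0 (Set.Ioi 0)) (nhds |iteratedDeriv k (fun ξ : ℝ => deriv y (ξ^2/4)) 0|) :=
        ((smooth_iter hU k).continuous.abs.tendsto 0).mono_left nhdsWithin_le_nhds
      have hlim : |iteratedDeriv k (fun ξ : ℝ => deriv y (ξ^2/4)) 0| ≤ (C + (N-1)/2 * M)/m := by
        refine le_of_tendsto hcont ?_
        filter_upwards [Ioc_mem_nhdsGT_of_mem ⟨le_refl (0:ℝ), two_pos⟩] with ξ hξ
        exact hIo ξ hξ
      calc M = |iteratedDeriv k (fun ξ : ℝ => deriv y (ξ^2/4)) 0| := by rw [hMdef, ← h0]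
        _ ≤ (C + (N-1)/2 * M)/m := hlim
    · exact hIo ξ0 ⟨h0, hξ0.2⟩
  have hk1 : (0:ℝ) < (k:ℝ) + 1 := by positivity
  have hMC : M ≤ 2/((k:ℝ)+1) * C := by
    have h1 : M * m ≤ C + (N-1)/2 * M := (le_div_iff₀ hm0).mp hM_le
    rw [div_mul_eq_mul_div, le_div_iff₀ hk1]
    rw [hm] at h1
    nlinarith
  intro x hx
  rcases eq_or_lt_of_le hx.1 with h0 | h0
  · rw [← h0]
    cases k with
    | zero =>
      have e4 : dotD^[0] (deriv y) 0 = iteratedDeriv 0 (fun ξ : ℝ => deriv y (ξ^2/4)) 0 := by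
        simp
      rw [e4]
      refine le_trans (hM 0 ⟨le_refl 0, by norm_num⟩) ?_
      exact_mod_cast hMC
    | succ j =>
      rw [Function.iterate_succ_apply']
      show |Real.sqrt 0 * _| ≤ _
      rw [Real.sqrt_zero, zero_mul, abs_zero]
      positivity
  · rw [huk x h0]
    have h2s : 2*Real.sqrt x ∈ Set.Icc (0:ℝ) 2 := by
      constructor
      · positivity
      · nlinarith [Real.sqrt_le_one.mpr hx.2, Real.sqrt_nonneg x]
    exact le_trans (hM _ h2s) hMC
end

section
/- Let $N>2$ and $\mathfrak X=L^2((0,1);x^{N/2-1}dx)$ with norm $\|\cdot\|$. Let $\dot D=\sqrt x\frac{d}{dx}$ and $\triangle=x\frac{d^2}{dx^2}+\frac N2\frac{d}{dx}$. Then there is a constant $C=C(N)$ such that for all $y\in C^\infty([0,1])$: $\|\dot D y\|\le C(\|y\|+\|\triangle y\|)$. -/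
set_option maxHeartbeats 1000000

open MeasureTheory Set intervalIntegral ContDiff

lemma myII {f : ℝ → ℝ} (hf : ContinuousOn f (Icc 0 1)) :
    IntervalIntegrable f volume 0 1 := by
  apply ContinuousOn.intervalIntegrable
  rwa [uIcc_of_le zero_le_one]

lemma myContRpow {p : ℝ} (hp : 0 ≤ p) : ContinuousOn (fun x : ℝ => x ^ p) (Icc 0 1) :=
  fun x _ => (Real.continuousAt_rpow_const x p (Or.inr hp)).continuousWithinAt

lemma myFTC {F F' : ℝ → ℝ} (hd : ∀ x ∈ Icc (0:ℝ) 1, HasDerivAt F (F' x) x)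
    (hi : IntervalIntegrable F' volume 0 1) :
    ∫ x in (0:ℝ)..1, F' x = F 1 - F 0 :=
  intervalIntegral.integral_eq_sub_of_hasDerivAt
    (fun x hx => hd x (by rwa [uIcc_of_le zero_le_one] at hx)) hi

lemma myCSstep {f g w : ℝ → ℝ} (hf : ContinuousOn f (Icc 0 1)) (hg : ContinuousOn g (Icc 0 1))
    (hw : ContinuousOn w (Icc 0 1)) (hw0 : ∀ x ∈ Icc (0:ℝ) 1, 0 ≤ w x) {ε : ℝ} (hε : 0 < ε) :
    ∫ x in (0:ℝ)..1, f x * g x * w x ≤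
      ε/2 * (∫ x in (0:ℝ)..1, f x^2 * w x) + (1/(2*ε)) * (∫ x in (0:ℝ)..1, g x^2 * w x) := by
  have h1 : IntervalIntegrable (fun x => f x * g x * w x) volume 0 1 :=
    myII ((hf.mul hg).mul hw)
  have h2 : IntervalIntegrable (fun x => ε/2 * (f x^2 * w x) + (1/(2*ε)) * (g x^2 * w x)) volume 0 1 :=
    myII (((continuousOn_const.mul ((hf.pow 2).mul hw))).add
      ((continuousOn_const.mul ((hg.pow 2).mul hw))))
  have key : ∫ x in (0:ℝ)..1, f x * g x * w x ≤
      ∫ x in (0:ℝ)..1, (ε/2 * (f x^2 * w x) + (1/(2*ε)) * (g x^2 * w x)) := by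
    apply intervalIntegral.integral_mono_on zero_le_one h1 h2
    intro x hx
    have h0 := hw0 x hx
    have hid : ε/2 * (f x^2 * w x) + (1/(2*ε)) * (g x^2 * w x) - f x * g x * w x
        = (ε * f x - g x)^2 * w x / (2*ε) := by
      field_simp
      ring
    nlinarith [div_nonneg (mul_nonneg (sq_nonneg (ε * f x - g x)) h0) (by linarith : (0:ℝ) ≤ 2*ε)]
  rw [intervalIntegral.integral_add (myII (f := fun x => ε/2 * (f x^2 * w x)) (continuousOn_const.mul ((hf.pow 2).mul hw)))
      (myII (f := fun x => (1/(2*ε)) * (g x^2 * w x)) (continuousOn_const.mul ((hg.pow 2).mul hw))),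
    intervalIntegral.integral_const_mul, intervalIntegral.integral_const_mul] at key
  exact key

lemma myCS {f g w : ℝ → ℝ} (hf : ContinuousOn f (Icc 0 1)) (hg : ContinuousOn g (Icc 0 1))
    (hw : ContinuousOn w (Icc 0 1)) (hw0 : ∀ x ∈ Icc (0:ℝ) 1, 0 ≤ w x) :
    ∫ x in (0:ℝ)..1, f x * g x * w x ≤
      Real.sqrt (∫ x in (0:ℝ)..1, f x^2 * w x) * Real.sqrt (∫ x in (0:ℝ)..1, g x^2 * w x) := by
  set A := ∫ x in (0:ℝ)..1, f x^2 * w x with hA'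
  set B := ∫ x in (0:ℝ)..1, g x^2 * w x with hB'
  have hA : 0 ≤ A := intervalIntegral.integral_nonneg zero_le_one
    (fun x hx => mul_nonneg (sq_nonneg _) (hw0 x hx))
  have hB : 0 ≤ B := intervalIntegral.integral_nonneg zero_le_one
    (fun x hx => mul_nonneg (sq_nonneg _) (hw0 x hx))
  set a := Real.sqrt A with ha'
  set b := Real.sqrt B with hb'
  have ha0 : 0 ≤ a := Real.sqrt_nonneg _
  have hb0 : 0 ≤ b := Real.sqrt_nonneg _
  have haa : a * a = A := Real.mul_self_sqrt hA
  have hbb : b * b = B := Real.mul_self_sqrt hB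
  apply le_of_forall_pos_le_add
  intro δ' hδ'
  set δ := δ' / (a + b + 1) with hδdef
  have hδ : 0 < δ := by positivity
  have hεpos : 0 < (b + δ)/(a + δ) := by positivity
  have key := myCSstep hf hg hw hw0 hεpos
  rw [← hA', ← hB'] at key
  have e1 : ((b + δ)/(a + δ))/2 * A ≤ a * (b + δ)/2 := by
    rw [div_div, div_mul_eq_mul_div, div_le_div_iff₀ (by positivity) (by positivity)]
    nlinarith [haa, mul_nonneg (mul_nonneg ha0 hδ.le) (add_nonneg hb0 hδ.le)]
  have e2 : (1/(2*((b + δ)/(a + δ)))) * B ≤ b * (a + δ)/2 := by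
    have : (1:ℝ)/(2*((b + δ)/(a + δ))) = (a + δ)/(2*(b + δ)) := by
      field_simp
    rw [this, div_mul_eq_mul_div, div_le_div_iff₀ (by positivity) (by positivity)]
    nlinarith [hbb, mul_nonneg (mul_nonneg hb0 hδ.le) (add_nonneg ha0 hδ.le)]
  have e3 : a * (b + δ)/2 + b * (a + δ)/2 ≤ a * b + δ' := by
    have h1 : δ * (a + b) ≤ δ' * 1 := by
      rw [hδdef, div_mul_eq_mul_div, div_le_iff₀ (by positivity)]
      nlinarith
    nlinarith
  linarith


lemma alg_pt (u c omg : ℝ) (homg : 0 ≤ omg) : (u - c)^2 * omg ≤ 2*(u^2 * omg) + (2*c^2) * omg := by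
  nlinarith [mul_nonneg (sq_nonneg (u + c)) homg]

lemma alg_W (Wv Av cv t : ℝ) (h : Wv ≤ 2*Av + 2*cv^2*t) (ht : t ≤ 1) :
    Wv ≤ 2*Av + 2*cv^2 := by nlinarith [sq_nonneg cv]

lemma alg_sqW (Wv av cc q2 : ℝ) (h : Wv ≤ 2*(av*av) + 2*cc^2) (ha : 0 ≤ av) (hc : 0 ≤ cc)
    (hq : q2^2 = 2) (hq0 : 0 ≤ q2) : Wv ≤ (q2*(av+cc))^2 := by
  nlinarith [mul_nonneg ha hc]

lemma alg_key (t u v : ℝ) (ht0 : 0 ≤ t) (ht1 : t ≤ 1) (hu : 0 ≤ u) (hv : 0 ≤ v) :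
    (t*t)*(u*v) ≤ u*(t*v) := by
  nlinarith [mul_nonneg (mul_nonneg (mul_nonneg ht0 hu) hv) (sub_nonneg.mpr ht1)]

lemma alg_tr (cv s av Av dv : ℝ) (h : cv^2 ≤ s^2*Av + 2*(av*dv)) (hA : av*av = Av)
    (ha : 0 ≤ av) (hd : 0 ≤ dv) (hs : 0 ≤ s) : cv^2 ≤ (s*av + (av+dv))^2 := by
  nlinarith [mul_nonneg ha hd, mul_nonneg hs (mul_nonneg ha hd),
    mul_nonneg hs (mul_nonneg ha ha), sq_nonneg av, sq_nonneg dv]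

lemma alg_h2 (Bv lv q2 av cc dv s : ℝ) (h1 : Bv ≤ lv*(q2*(av+cc)))
    (hc : cc ≤ s*av + (av+dv)) (hl : 0 ≤ lv) (hq0 : 0 ≤ q2) :
    Bv ≤ q2*lv*((2+s)*av + dv) := by
  nlinarith [mul_le_mul_of_nonneg_left hc (mul_nonneg hq0 hl)]

lemma alg_fin (av dv lv s q2 : ℝ) (h : dv*dv ≤ q2*lv*((2+s)*av + dv)) (hq : q2^2 = 2)
    (hq0 : 0 ≤ q2) (ha : 0 ≤ av) (hd : 0 ≤ dv) (hl : 0 ≤ lv) (hs : 0 ≤ s) :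
    dv^2 ≤ (q2*(2+s)+2)*((av+lv)^2) := by
  nlinarith [sq_nonneg (dv - q2*lv), mul_nonneg ha hl,
    mul_nonneg hq0 (sq_nonneg av), mul_nonneg hq0 (sq_nonneg lv),
    mul_nonneg (mul_nonneg hq0 hs) (sq_nonneg av),
    mul_nonneg (mul_nonneg hq0 hs) (sq_nonneg lv),
    mul_nonneg hs (mul_nonneg ha hl), mul_nonneg (mul_nonneg hq0 hs) (mul_nonneg ha hl),
    mul_nonneg hq0 (mul_nonneg ha hl)]

noncomputable def xNorm (N : ℝ) (f : ℝ → ℝ) : ℝ :=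
  Real.sqrt (∫ x in (0:ℝ)..1, (f x) ^ 2 * x ^ (N / 2 - 1))

theorem stmt_13 (N : ℝ) (hN : 2 < N) :
    ∃ C > 0, ∀ y : ℝ → ℝ, ContDiff ℝ (⊤ : ℕ∞) y →
      xNorm N (fun x => Real.sqrt x * deriv y x) ≤
        C * (xNorm N y + xNorm N (lap N y)) := by
  set p : ℝ := N / 2 - 1 with hpdef
  have hp0 : 0 < p := by rw [hpdef]; linarith
  have hp1 : (1:ℝ) ≤ p + 1 := by linarith
  have hpq : N / 2 = p + 1 := by rw [hpdef]; ring
  set s : ℝ := Real.sqrt (p + 1) with hsdef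
  have hs0 : 0 ≤ s := Real.sqrt_nonneg _
  set K : ℝ := Real.sqrt 2 * (2 + s) with hKdef
  have hK0 : 0 ≤ K := mul_nonneg (Real.sqrt_nonneg 2) (by linarith)
  have hK2 : (0:ℝ) ≤ K + 2 := by linarith
  refine ⟨Real.sqrt (K + 2), Real.sqrt_pos.mpr (by linarith), ?_⟩
  intro y hy
  -- smoothness facts
  have hys : ContDiff ℝ ∞ y := hy.of_le (by simp)
  obtain ⟨hy1, hy'⟩ := contDiff_infty_iff_deriv.mp hys
  obtain ⟨hy2, hy''⟩ := contDiff_infty_iff_deriv.mp hy'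
  have hyc : Continuous y := hy1.continuous
  have hy'c : Continuous (deriv y) := hy2.continuous
  have hy''c : Continuous (deriv (deriv y)) := hy''.continuous
  set c : ℝ := y 1 with hcdef
  set w : ℝ → ℝ := fun x => y x - c with hwdef
  have hw' : ∀ x : ℝ, HasDerivAt w (deriv y x) x := fun x => ((hy1 x).hasDerivAt).sub_const c
  have hwc : Continuous w := hyc.sub continuous_const
  have hlapc : Continuous (lap N y) := by
    unfold lap
    exact (continuous_id.mul hy''c).add (continuous_const.mul hy'c)
  -- continuity on Icc
  have hcP : ContinuousOn (fun x : ℝ => x ^ p) (Icc 0 1) := myContRpow hp0.le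
  have hcP1 : ContinuousOn (fun x : ℝ => x ^ (p+1)) (Icc 0 1) := myContRpow (by linarith)
  have hcS : ContinuousOn (fun x => Real.sqrt x * deriv y x) (Icc 0 1) :=
    (Real.continuous_sqrt.mul hy'c).continuousOn
  -- weight nonneg
  have hω0 : ∀ x ∈ Icc (0:ℝ) 1, 0 ≤ (x:ℝ) ^ p := fun x hx => Real.rpow_nonneg hx.1 p
  -- x * x^p = x^(p+1) on Icc
  have hxmul : ∀ x ∈ Icc (0:ℝ) 1, x * x ^ p = x ^ (p+1) := by
    intro x hx
    rcases eq_or_lt_of_le hx.1 with h0 | h0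
    · rw [← h0, Real.zero_rpow (by linarith : p + 1 ≠ 0), zero_mul]
    · rw [Real.rpow_add h0, Real.rpow_one]; ring
  -- main quantities
  set A := ∫ x in (0:ℝ)..1, (y x)^2 * x ^ p with hAdef
  set B := ∫ x in (0:ℝ)..1, (Real.sqrt x * deriv y x)^2 * x ^ p with hBdef
  set L := ∫ x in (0:ℝ)..1, (lap N y x)^2 * x ^ p with hLdef
  have hA0 : 0 ≤ A := intervalIntegral.integral_nonneg zero_le_one
    (fun x hx => mul_nonneg (sq_nonneg _) (hω0 x hx))
  have hB0 : 0 ≤ B := intervalIntegral.integral_nonneg zero_le_one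
    (fun x hx => mul_nonneg (sq_nonneg _) (hω0 x hx))
  have hL0 : 0 ≤ L := intervalIntegral.integral_nonneg zero_le_one
    (fun x hx => mul_nonneg (sq_nonneg _) (hω0 x hx))
  set a := Real.sqrt A with hadef
  set d := Real.sqrt B with hddef
  set l := Real.sqrt L with hldef
  have ha0 : 0 ≤ a := Real.sqrt_nonneg _
  have hd0 : 0 ≤ d := Real.sqrt_nonneg _
  have hl0 : 0 ≤ l := Real.sqrt_nonneg _
  have haa : a * a = A := Real.mul_self_sqrt hA0
  have hdd : d * d = B := Real.mul_self_sqrt hB0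
  have hll : l * l = L := Real.mul_self_sqrt hL0
  -- unfold goal
  simp only [xNorm]
  rw [← hpdef]
  -- quantities already set above (A, B, L, a, d, l)
  -- Step 1 : integration by parts
  have hstep1 : B = - ∫ x in (0:ℝ)..1, lap N y x * w x * x ^ p := by
    have hBalt : B = ∫ x in (0:ℝ)..1, x ^ (p+1) * (deriv y x)^2 := by
      rw [hBdef]
      apply intervalIntegral.integral_congr
      intro x hx
      rw [uIcc_of_le zero_le_one] at hx
      dsimp only
      rw [mul_pow, Real.sq_sqrt hx.1, ← hxmul x hx]
      ring
    set G1 : ℝ → ℝ := fun x => (p+1) * x ^ p * (deriv y x * w x) with hG1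
    set G2 : ℝ → ℝ := fun x => x ^ (p+1) * (deriv (deriv y) x * w x) with hG2
    set G3 : ℝ → ℝ := fun x => x ^ (p+1) * (deriv y x)^2 with hG3
    have hcG1 : ContinuousOn G1 (Icc 0 1) :=
      (continuousOn_const.mul hcP).mul ((hy'c.mul hwc).continuousOn)
    have hcG2 : ContinuousOn G2 (Icc 0 1) := hcP1.mul ((hy''c.mul hwc).continuousOn)
    have hcG3 : ContinuousOn G3 (Icc 0 1) := hcP1.mul ((hy'c.pow 2).continuousOn)
    have hder : ∀ x ∈ Icc (0:ℝ) 1, HasDerivAt (fun t => t ^ (p+1) * (deriv y t * w t))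
        (G1 x + (G2 x + G3 x)) x := by
      intro x hx
      have h1 : HasDerivAt (fun t : ℝ => t ^ (p+1)) ((p+1) * x ^ p) x := by
        simpa using Real.hasDerivAt_rpow_const (x := x) (p := p+1) (Or.inr hp1)
      have h2 : HasDerivAt (fun t => deriv y t * w t)
          (deriv (deriv y) x * w x + deriv y x * deriv y x) x :=
        ((hy2 x).hasDerivAt).mul (hw' x)
      convert h1.fun_mul h2 using 1
      · rfl
      · rfl
      simp only [hG1, hG2, hG3]
      ring
    have hFTC := myFTC hder (myII (hcG1.add (hcG2.add hcG3)))
    have hval : (fun t => t ^ (p+1) * (deriv y t * w t)) 1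
        - (fun t => t ^ (p+1) * (deriv y t * w t)) 0 = 0 := by
      simp [hwdef, hcdef, Real.one_rpow, Real.zero_rpow (show p+1 ≠ 0 by linarith)]
    have hsplit : (∫ x in (0:ℝ)..1, G1 x) + ((∫ x in (0:ℝ)..1, G2 x)
        + (∫ x in (0:ℝ)..1, G3 x)) = 0 := by
      rw [← intervalIntegral.integral_add (myII hcG2) (myII hcG3),
        ← intervalIntegral.integral_add (myII hcG1) (myII (f := fun x => G2 x + G3 x) (hcG2.add hcG3))]
      rw [hval] at hFTC
      exact hFTC
    have hsum12 : (∫ x in (0:ℝ)..1, G1 x) + (∫ x in (0:ℝ)..1, G2 x)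
        = ∫ x in (0:ℝ)..1, lap N y x * w x * x ^ p := by
      rw [← intervalIntegral.integral_add (myII hcG1) (myII hcG2)]
      apply intervalIntegral.integral_congr
      intro x hx
      rw [uIcc_of_le zero_le_one] at hx
      simp only [hG1, hG2, lap]
      rw [hpq, ← hxmul x hx]
      ring
    have hB3 : B = ∫ x in (0:ℝ)..1, G3 x := hBalt
    linarith
  -- W and its bound
  set W := ∫ x in (0:ℝ)..1, (w x)^2 * x ^ p with hWdef
  have hW0 : 0 ≤ W := intervalIntegral.integral_nonneg zero_le_one
    (fun x hx => mul_nonneg (sq_nonneg _) (hω0 x hx))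
  -- Step 2 : Cauchy-Schwarz
  have hstep2 : B ≤ l * Real.sqrt W := by
    rw [hstep1]
    have hneg : - ∫ x in (0:ℝ)..1, lap N y x * w x * x ^ p
        = ∫ x in (0:ℝ)..1, (-(lap N y x)) * w x * x ^ p := by
      rw [← intervalIntegral.integral_neg]
      apply intervalIntegral.integral_congr
      intro x hx
      ring
    rw [hneg]
    have hcs := myCS (f := fun x => -(lap N y x)) (g := w) (w := fun x => x ^ p)
      (hlapc.neg.continuousOn) (hwc.continuousOn) hcP hω0
    have hL' : (∫ x in (0:ℝ)..1, (-(lap N y x))^2 * x ^ p) = L := by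
      rw [hLdef]
      apply intervalIntegral.integral_congr
      intro x hx
      dsimp only
      rw [neg_sq]
    rw [hL', ← hWdef] at hcs
    exact hcs
  -- integral of weight
  have hIp : (∫ x in (0:ℝ)..1, x ^ p) = 1/(p+1) := by
    rw [integral_rpow (Or.inl (by linarith : (-1:ℝ) < p))]
    rw [Real.one_rpow, Real.zero_rpow (by linarith : p+1 ≠ 0)]
    norm_num
  -- Step 3 : W ≤ 2A + 2c²
  have hWle : W ≤ 2*A + 2*c^2 := by
    have h1 : W ≤ ∫ x in (0:ℝ)..1, (2*((y x)^2 * x ^ p) + (2*c^2) * x ^ p) := by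
      apply intervalIntegral.integral_mono_on zero_le_one
        (myII (((hwc.pow 2).continuousOn).mul hcP))
        (myII ((continuousOn_const.mul (((hyc.pow 2).continuousOn).mul hcP)).add
          (continuousOn_const.mul hcP)))
      intro x hx
      simp only [hwdef]
      exact alg_pt (y x) c (x ^ p) (hω0 x hx)
    rw [intervalIntegral.integral_add
        (myII (f := fun x => 2*((y x)^2 * x ^ p)) (continuousOn_const.mul (((hyc.pow 2).continuousOn).mul hcP)))
        (myII (f := fun x => (2*c^2) * x ^ p) (continuousOn_const.mul hcP)),
      intervalIntegral.integral_const_mul, intervalIntegral.integral_const_mul,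
      hIp, ← hAdef] at h1
    have h2 : 1/(p+1) ≤ 1 := by
      rw [div_le_one (by linarith)]
      linarith
    exact alg_W W A c (1/(p+1)) h1 h2
  have hsqrtW : Real.sqrt W ≤ Real.sqrt 2 * (a + |c|) := by
    have hb : W ≤ (Real.sqrt 2 * (a + |c|))^2 := by
      have hWle' : W ≤ 2*(a*a) + 2*|c|^2 := by rw [haa, sq_abs]; exact hWle
      exact alg_sqW W a |c| (Real.sqrt 2) hWle' ha0 (abs_nonneg c)
        (Real.sq_sqrt (by norm_num)) (Real.sqrt_nonneg 2)
    calc Real.sqrt W ≤ Real.sqrt ((Real.sqrt 2 * (a + |c|))^2) := Real.sqrt_le_sqrt hb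
      _ = Real.sqrt 2 * (a + |c|) := Real.sqrt_sq (by positivity)
  -- Step 4 : trace estimate
  have htrace : c^2 ≤ (p+1)*A + 2*(a*d) := by
    set H1 : ℝ → ℝ := fun x => (p+1) * x ^ p * (y x)^2 with hH1
    set H2 : ℝ → ℝ := fun x => x ^ (p+1) * (2 * y x * deriv y x) with hH2
    have hcH1 : ContinuousOn H1 (Icc 0 1) :=
      (continuousOn_const.mul hcP).mul ((hyc.pow 2).continuousOn)
    have hcH2 : ContinuousOn H2 (Icc 0 1) :=
      hcP1.mul (((continuous_const.mul hyc).mul hy'c).continuousOn)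
    have hder2 : ∀ x ∈ Icc (0:ℝ) 1, HasDerivAt (fun t => t ^ (p+1) * (y t)^2)
        (H1 x + H2 x) x := by
      intro x hx
      have h1 : HasDerivAt (fun t : ℝ => t ^ (p+1)) ((p+1) * x ^ p) x := by
        simpa using Real.hasDerivAt_rpow_const (x := x) (p := p+1) (Or.inr hp1)
      have h2 : HasDerivAt (fun t => (y t)^2) (2 * y x * deriv y x) x := by
        exact (by simpa using ((hy1 x).hasDerivAt).pow 2 : HasDerivAt (y ^ 2) (2 * y x * deriv y x) x)
      convert h1.fun_mul h2 using 1
      try (simp only [hH1, hH2]; ring)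
    have hFTC2 := myFTC hder2 (myII (hcH1.add hcH2))
    have hval2 : (fun t => t ^ (p+1) * (y t)^2) 1 - (fun t => t ^ (p+1) * (y t)^2) 0
        = c^2 := by
      simp [hcdef, Real.one_rpow, Real.zero_rpow (show p+1 ≠ 0 by linarith)]
    have hH1int : (∫ x in (0:ℝ)..1, H1 x) = (p+1) * A := by
      have e : (∫ x in (0:ℝ)..1, H1 x) = ∫ x in (0:ℝ)..1, (p+1)*((y x)^2 * x ^ p) := by
        apply intervalIntegral.integral_congr
        intro x hx
        simp only [hH1]
        ring
      rw [e, intervalIntegral.integral_const_mul, ← hAdef]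
    have hH2le : (∫ x in (0:ℝ)..1, H2 x) ≤ 2*(a*d) := by
      have hcabs1 : ContinuousOn (fun x => |y x|) (Icc 0 1) := hyc.abs.continuousOn
      have hcabs2 : ContinuousOn (fun x => |Real.sqrt x * deriv y x|) (Icc 0 1) :=
        (Real.continuous_sqrt.mul hy'c).abs.continuousOn
      have hmono : (∫ x in (0:ℝ)..1, H2 x)
          ≤ ∫ x in (0:ℝ)..1, 2*(|y x| * |Real.sqrt x * deriv y x| * x ^ p) := by
        apply intervalIntegral.integral_mono_on zero_le_one (myII hcH2)
          (myII (f := fun x => 2*(|y x| * |Real.sqrt x * deriv y x| * x ^ p)) (continuousOn_const.mul ((hcabs1.mul hcabs2).mul hcP)))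
        intro x hx
        simp only [hH2]
        rw [← hxmul x hx]
        have hsx : Real.sqrt x * Real.sqrt x = x := Real.mul_self_sqrt hx.1
        have hx1 : Real.sqrt x ≤ 1 := Real.sqrt_le_one.mpr hx.2
        have habs : |Real.sqrt x * deriv y x| = Real.sqrt x * |deriv y x| := by
          rw [abs_mul, abs_of_nonneg (Real.sqrt_nonneg x)]
        have key : x * (y x * deriv y x) ≤ |y x| * (Real.sqrt x * |deriv y x|) := by
          calc x * (y x * deriv y x) ≤ |x * (y x * deriv y x)| := le_abs_self _
            _ = (Real.sqrt x * Real.sqrt x) * (|y x| * |deriv y x|) := by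
                rw [abs_mul, abs_mul, abs_of_nonneg hx.1, hsx]
            _ ≤ |y x| * (Real.sqrt x * |deriv y x|) :=
                alg_key (Real.sqrt x) (|y x|) (|deriv y x|) (Real.sqrt_nonneg x) hx1
                  (abs_nonneg (y x)) (abs_nonneg (deriv y x))
        rw [habs]
        linarith only [mul_le_mul_of_nonneg_right key (hω0 x hx)]
      have hcs := myCS (f := fun x => |y x|) (g := fun x => |Real.sqrt x * deriv y x|)
        (w := fun x => x ^ p) hcabs1 hcabs2 hcP hω0
      have e1 : (∫ x in (0:ℝ)..1, (|y x|)^2 * x ^ p) = A := by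
        rw [hAdef]
        apply intervalIntegral.integral_congr
        intro x hx
        dsimp only
        rw [sq_abs]
      have e2 : (∫ x in (0:ℝ)..1, (|Real.sqrt x * deriv y x|)^2 * x ^ p) = B := by
        rw [hBdef]
        apply intervalIntegral.integral_congr
        intro x hx
        dsimp only
        rw [sq_abs]
      rw [e1, e2, ← hadef, ← hddef] at hcs
      rw [intervalIntegral.integral_const_mul] at hmono
      have := mul_le_mul_of_nonneg_left hcs (by norm_num : (0:ℝ) ≤ 2)
      linarith only [hmono, this]
    rw [hval2, intervalIntegral.integral_add (myII hcH1) (myII hcH2), hH1int] at hFTC2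
    linarith
  -- bound |c|
  have hss : s^2 = p + 1 := Real.sq_sqrt (by linarith)
  have hc : |c| ≤ s*a + (a + d) := by
    have htrace' : c^2 ≤ s^2*A + 2*(a*d) := by rw [hss]; exact htrace
    have h1 : c^2 ≤ (s*a + (a + d))^2 := alg_tr c s a A d htrace' haa ha0 hd0 hs0
    calc |c| = Real.sqrt (c^2) := (Real.sqrt_sq_eq_abs c).symm
      _ ≤ Real.sqrt ((s*a + (a + d))^2) := Real.sqrt_le_sqrt h1
      _ = s*a + (a + d) := Real.sqrt_sq (by positivity)
  -- Step 5 : combine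
  have h2 : B ≤ Real.sqrt 2 * l * ((2+s)*a + d) := by
    have h1 : B ≤ l * (Real.sqrt 2 * (a + |c|)) :=
      le_trans hstep2 (mul_le_mul_of_nonneg_left hsqrtW hl0)
    exact alg_h2 B l (Real.sqrt 2) a (|c|) d s h1 hc hl0 (Real.sqrt_nonneg 2)
  rw [← hdd] at h2
  have hs2 : Real.sqrt 2 ^ 2 = 2 := Real.sq_sqrt (by norm_num)
  have hfin : d^2 ≤ (K+2)*((a+l)^2) := by
    have := alg_fin a d l s (Real.sqrt 2) h2 hs2 (Real.sqrt_nonneg 2) ha0 hd0 hl0 hs0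
    rw [← hKdef] at this
    exact this
  calc d = Real.sqrt (d^2) := (Real.sqrt_sq hd0).symm
    _ ≤ Real.sqrt ((K+2)*((a+l)^2)) := Real.sqrt_le_sqrt hfin
    _ = Real.sqrt (K+2) * (a + l) := by
        rw [Real.sqrt_mul hK2, Real.sqrt_sq (by positivity)]
end
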